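/- arXiv:1909.02308 — 6 statements merged into one kernel-verified Lean document; each statement's English description precedes it below -/
import Mathlib

section
/- The bipartite degree sequence h_k(n) = h_0(n) − k·𝟙_{a_1} − k·𝟙_{b_n} is indecomposable for all 0 < k < n, where h_0(n) has degrees deg(a_i)=n+1−i and deg(b_i)=i. That is, there exist no p, q with 0 < p+q < 2n, 0 ≤ p,q ≤ n satisfying the decomposition equation: (sum of the p largest degrees on side A) = p(n−q) + (sum of the q smallest-indexed degrees on side B as in the Tyshkevich criterion). -/
/-!
With `r = n - q` and `m = q - p`, the closed form `2 Σ_{i ≤ p} d_i = 2p(n+1) - p(p+1) - 2 min(p, k)`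
turns the decomposition equation into `m(m+1) = 2(k - min(p, k) - min(r, k))`. For an integer `m`
the left side is at least `0` and at least `2m`; in each of the four cases for the two minima one
of these bounds forces `k ≤ 0`, `k ≥ n`, `p + q ≤ 0` or `p + q ≥ 2n`.
-/

/-- The sorted (non-increasing) degree sequence of either side of `h_k(n)`:
`d i = n - i` for `1 ≤ i ≤ k` and `d i = n + 1 - i` for `k < i ≤ n`. -/
def hkSortedDeg (n k i : ℕ) : ℕ := if i ≤ k then n - i else n + 1 - i

lemma two_mul_sum_hkSortedDeg (n k p : ℕ) (hp : p ≤ n) :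
    2 * (∑ i ∈ Finset.Icc 1 p, hkSortedDeg n k i : ℤ) =
      2 * p * (n + 1) - p * (p + 1) - 2 * min p k := by
  induction p with
  | zero => simp
  | succ p ih =>
    rw [Finset.sum_Icc_succ_top (by omega), mul_add, ih (by omega), hkSortedDeg]
    split_ifs with hpk
    · rw [min_eq_left (by omega), min_eq_left (by omega)]
      push_cast [Nat.cast_sub hp]
      ring
    · rw [min_eq_right (by omega : k ≤ p + 1), min_eq_right (by omega : k ≤ p)]
      push_cast [Nat.add_sub_add_right, Nat.cast_sub (by omega : p ≤ n)]
      ring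

lemma two_mul_sum_Icc_add_hkSortedDeg (r q k : ℕ) (hk : k ≤ r + q) :
    2 * (∑ i ∈ Finset.Icc (r + 1) (r + q), hkSortedDeg (r + q) k i : ℤ) =
      q * (q + 1) - 2 * k + 2 * min r k := by
  have hsplit := Finset.sum_Ioc_consecutive (fun i => (hkSortedDeg (r + q) k i : ℤ))
    (Nat.zero_le r) (Nat.le_add_right r q)
  simp only [← Finset.Icc_add_one_left_eq_Ioc, zero_add] at hsplit
  have hr := two_mul_sum_hkSortedDeg (r + q) k r (by omega)
  have hn := two_mul_sum_hkSortedDeg (r + q) k (r + q) le_rfl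
  rw [min_eq_right hk] at hn
  push_cast at hr hn ⊢
  linear_combination 2 * hsplit + hn - hr

lemma zero_le_mul_add_one_self (m : ℤ) : 0 ≤ m * (m + 1) := by
  rcases le_or_gt 0 m with hm | hm <;> nlinarith

lemma mul_add_one_ne_two_mul_sub_min {p q r k : ℤ} (hk : 0 < k) (hkn : k < r + q)
    (hpq : 0 < p + q) (hpqn : p + q < 2 * (r + q)) :
    (q - p) * (q - p + 1) ≠ 2 * (k - min p k - min r k) := by
  intro h
  have hm := zero_le_mul_add_one_self (q - p)
  have hm_pred := zero_le_mul_add_one_self (q - p - 1)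
  rcases min_cases p k with ⟨hpk, -⟩ | ⟨hpk, -⟩ <;>
    rcases min_cases r k with ⟨hrk, -⟩ | ⟨hrk, -⟩ <;> rw [hpk, hrk] at h <;> nlinarith

/-- The bipartite degree sequence `h_k(n) = h_0(n) - k·𝟙_{a_1} - k·𝟙_{b_n}` is
indecomposable for `0 < k < n`: there are no `p, q` satisfying the Tyshkevich
decomposition criterion
`Σ_{i=1}^p d^A_i = p(n - q) + Σ_{i=n-q+1}^n d^B_i`
(both sides sorted non-increasingly). -/
theorem stmt_3 (n k : ℕ) (hk : 0 < k) (hkn : k < n) :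
    ¬ ∃ p q : ℕ, 0 < p + q ∧ p + q < 2 * n ∧ p ≤ n ∧ q ≤ n ∧
      (∑ i ∈ Finset.Icc 1 p, hkSortedDeg n k i) =
        p * (n - q) + ∑ i ∈ Finset.Icc (n - q + 1) n, hkSortedDeg n k i := by
  rintro ⟨p, q, hpq, hpqn, hpn, hqn, heq⟩
  obtain ⟨r, rfl⟩ : ∃ r, n = r + q := ⟨n - q, by omega⟩
  rw [Nat.add_sub_cancel] at heq
  have hprefix := two_mul_sum_hkSortedDeg (r + q) k p hpn
  have hsuffix := two_mul_sum_Icc_add_hkSortedDeg r q k hkn.le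
  have heq' : (∑ i ∈ Finset.Icc 1 p, hkSortedDeg (r + q) k i : ℤ) =
      p * r + ∑ i ∈ Finset.Icc (r + 1) (r + q), hkSortedDeg (r + q) k i := by
    exact_mod_cast heq
  push_cast at hprefix hsuffix heq'
  have hquad : ((q : ℤ) - p) * (q - p + 1) = 2 * (k - min (p : ℤ) k - min (r : ℤ) k) := by
    linear_combination hprefix - 2 * heq' - hsuffix
  exact mul_add_one_ne_two_mul_sub_min (by exact_mod_cast hk) (by exact_mod_cast hkn)
    (by exact_mod_cast hpq) (by exact_mod_cast hpqn) hquad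
end

section
/- Let G[A,B] be a bipartite graph. If G is decomposable as G = G[A_1,B_1] ∘ G[A_2,B_2] (Tyshkevich composition, where every vertex of A_1 is joined to every vertex of B_2) with both factors non-empty, then for any x ∈ A_1 and y ∈ B_2, the edge xy is contained in no alternating cycle of G, and the degree sequence d(G) + 𝟙_x + 𝟙_y is not graphic as a bipartite degree sequence. -/
/-
A vertex of `A₂` is adjacent only to `B₂`, and a vertex of `B₂` is non-adjacent only to `A₂`;
so once an alternating cycle enters `A₂` it never leaves it. An alternating cycle using the
edge `xy` enters `A₂` right after `y`, yet has to return to `x ∈ A₁`; and `xy` is not a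
non-edge at all.

For the degree sequence, count edges into `B₂` in a realization `E` of `d(G) + 𝟙_x + 𝟙_y`:
at most `|A₁|` per vertex from `A₁`, and at most `∑_{A₂} d = e(G₂)` from `A₂`, which totals
`|A₁||B₂| + e(G₂)`. But the prescribed degrees on `B₂` sum to one more than that.
-/

/-- Degree on the `A`-side of a bipartite graph given by `E : A → B → Bool`. -/
def degA {A B : Type*} [Fintype B] (E : A → B → Bool) (a : A) : ℕ :=
  (Finset.univ.filter fun b => E a b = true).card

/-- Degree on the `B`-side. -/
def degB {A B : Type*} [Fintype A] (E : A → B → Bool) (b : B) : ℕ :=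
  (Finset.univ.filter fun a => E a b = true).card

/-- `E` realizes the bipartite degree sequence `(dA; dB)`. -/
def Realizes {A B : Type*} [Fintype A] [Fintype B]
    (E : A → B → Bool) (dA : A → ℕ) (dB : B → ℕ) : Prop :=
  (∀ a, degA E a = dA a) ∧ (∀ b, degB E b = dB b)

/-- The bipartite degree sequence `(dA; dB)` is graphic. -/
def BipGraphic {A B : Type*} [Fintype A] [Fintype B]
    (dA : A → ℕ) (dB : B → ℕ) : Prop :=
  ∃ E : A → B → Bool, Realizes E dA dB

/-- There is an alternating cycle of the bipartite graph `E` traversing the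
pair `(x, y)` (as one of its edges or one of its non-edges): a cycle
`a 0, b 0, a 1, b 1, …` with `a i b i` edges and `a (i+1) b i` non-edges. -/
def AltCycleOn {A B : Type*} (E : A → B → Bool) (x : A) (y : B) : Prop :=
  ∃ (m : ℕ) (a : ZMod m → A) (b : ZMod m → B), 2 ≤ m ∧
    Function.Injective a ∧ Function.Injective b ∧
    (∀ i, E (a i) (b i) = true) ∧ (∀ i, E (a (i + 1)) (b i) = false) ∧
    ((∃ i, a i = x ∧ b i = y) ∨ (∃ i, a (i + 1) = x ∧ b i = y))

/-- The Tyshkevich composition of two splitted bipartite graphs: every vertex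
of the first class of the first factor is joined to every vertex of the second
class of the second factor. -/
def bcomp {A₁ B₁ A₂ B₂ : Type*} (E₁ : A₁ → B₁ → Bool) (E₂ : A₂ → B₂ → Bool) :
    A₁ ⊕ A₂ → B₁ ⊕ B₂ → Bool
  | Sum.inl a, Sum.inl b => E₁ a b
  | Sum.inl _, Sum.inr _ => true
  | Sum.inr _, Sum.inl _ => false
  | Sum.inr a, Sum.inr b => E₂ a b

open Finset

theorem ZMod.forall_of_add_one_closed {m : ℕ} [NeZero m] {P : ZMod m → Prop}
    (hstep : ∀ j, P j → P (j + 1)) {i : ZMod m} (hi : P i) (j : ZMod m) : P j := by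
  have hshift : ∀ n : ℕ, P (i + n) := by
    intro n
    induction n with
    | zero => simpa using hi
    | succ n ih => simpa [add_assoc] using hstep _ ih
  simpa using hshift (j - i).val

section Degrees

variable {A B : Type*}

theorem sum_degA_eq_sum_degB [Fintype A] [Fintype B] (E : A → B → Bool) :
    ∑ a, degA E a = ∑ b, degB E b := by
  simp only [degA, degB, card_filter]
  exact Finset.sum_comm

theorem degA_eq_degA_inl_add_degA_inr {B₁ B₂ : Type*} [Fintype B₁] [Fintype B₂]
    (E : A → B₁ ⊕ B₂ → Bool) (a : A) :
    degA E a = degA (fun a b => E a (Sum.inl b)) a + degA (fun a b => E a (Sum.inr b)) a := by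
  simp only [degA, card_filter, Fintype.sum_sum_type]

theorem degB_eq_degB_inl_add_degB_inr {A₁ A₂ : Type*} [Fintype A₁] [Fintype A₂]
    (E : A₁ ⊕ A₂ → B → Bool) (b : B) :
    degB E b = degB (fun a b => E (Sum.inl a) b) b + degB (fun a b => E (Sum.inr a) b) b := by
  simp only [degB, card_filter, Fintype.sum_sum_type]

theorem degB_le_card [Fintype A] (E : A → B → Bool) (b : B) : degB E b ≤ Fintype.card A :=
  card_le_univ _

theorem sum_degB_inr_le {A₁ A₂ B₁ B₂ : Type*} [Fintype A₁] [Fintype A₂] [Fintype B₁]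
    [Fintype B₂] (E : A₁ ⊕ A₂ → B₁ ⊕ B₂ → Bool) :
    ∑ b : B₂, degB E (Sum.inr b) ≤
      Fintype.card B₂ * Fintype.card A₁ + ∑ a : A₂, degA E (Sum.inr a) := by
  let E₂₂ : A₂ → B₂ → Bool := fun a b => E (Sum.inr a) (Sum.inr b)
  calc ∑ b : B₂, degB E (Sum.inr b)
      = ∑ b : B₂, (degB (fun a b => E (Sum.inl a) b) (Sum.inr b) + degB E₂₂ b) :=
        sum_congr rfl fun b _ => degB_eq_degB_inl_add_degB_inr E _
    _ ≤ ∑ _b : B₂, Fintype.card A₁ + ∑ b : B₂, degB E₂₂ b := by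
        rw [← sum_add_distrib]
        gcongr with b
        exact degB_le_card _ _
    _ = Fintype.card B₂ * Fintype.card A₁ + ∑ a : A₂, degA E₂₂ a := by
        rw [sum_const, card_univ, smul_eq_mul, sum_degA_eq_sum_degB]
    _ ≤ Fintype.card B₂ * Fintype.card A₁ + ∑ a : A₂, degA E (Sum.inr a) := by
        gcongr with a
        rw [degA_eq_degA_inl_add_degA_inr E]
        exact Nat.le_add_left _ _

end Degrees

section Composition

variable {A₁ B₁ A₂ B₂ : Type*} (E₁ : A₁ → B₁ → Bool) (E₂ : A₂ → B₂ → Bool)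

theorem degA_bcomp_inr [Fintype B₁] [Fintype B₂] (a : A₂) :
    degA (bcomp E₁ E₂) (Sum.inr a) = degA E₂ a := by
  rw [degA_eq_degA_inl_add_degA_inr]
  simp only [bcomp]
  simp [degA]

theorem degB_bcomp_inr [Fintype A₁] [Fintype A₂] (b : B₂) :
    degB (bcomp E₁ E₂) (Sum.inr b) = Fintype.card A₁ + degB E₂ b := by
  rw [degB_eq_degB_inl_add_degB_inr]
  simp only [bcomp]
  simp [degB]

theorem isRight_of_bcomp_eq_true {a : A₁ ⊕ A₂} {b : B₁ ⊕ B₂} (h : bcomp E₁ E₂ a b = true)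
    (ha : a.isRight) : b.isRight := by
  rcases a with a | a <;> rcases b with b | b <;> simp_all [bcomp]

theorem isRight_of_bcomp_eq_false {a : A₁ ⊕ A₂} {b : B₁ ⊕ B₂} (h : bcomp E₁ E₂ a b = false)
    (hb : b.isRight) : a.isRight := by
  rcases a with a | a <;> rcases b with b | b <;> simp_all [bcomp]

theorem not_altCycleOn_bcomp (x : A₁) (y : B₂) :
    ¬ AltCycleOn (bcomp E₁ E₂) (Sum.inl x) (Sum.inr y) := by
  rintro ⟨m, a, b, hm, -, -, hedge, hnon, ⟨i, hax, hby⟩ | ⟨i, hax, hby⟩⟩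
  · have : NeZero m := ⟨by omega⟩
    have hstep : ∀ j, (a j).isRight → (a (j + 1)).isRight := fun j hj =>
      isRight_of_bcomp_eq_false E₁ E₂ (hnon j)
        (isRight_of_bcomp_eq_true E₁ E₂ (hedge j) hj)
    have hnext : (a (i + 1)).isRight :=
      isRight_of_bcomp_eq_false E₁ E₂ (hnon i) (by simp [hby])
    simpa [hax] using ZMod.forall_of_add_one_closed hstep hnext i
  · simpa [hax, hby, bcomp] using hnon i

end Composition

/-- If `G = G₁ ∘ G₂` is a Tyshkevich composition with both factors non-empty,
then for `x` in the first class of `G₁` and `y` in the second class of `G₂`,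
the edge `xy` lies on no alternating cycle, and `d(G) + 𝟙_x + 𝟙_y` is not
graphic. -/
theorem stmt_5 {A₁ B₁ A₂ B₂ : Type*}
    [Fintype A₁] [Fintype B₁] [Fintype A₂] [Fintype B₂]
    [DecidableEq A₁] [DecidableEq B₁] [DecidableEq A₂] [DecidableEq B₂]
    (E₁ : A₁ → B₁ → Bool) (E₂ : A₂ → B₂ → Bool) (x : A₁) (y : B₂) :
    ¬ AltCycleOn (bcomp E₁ E₂) (Sum.inl x) (Sum.inr y) ∧
    ¬ BipGraphic
        (fun a : A₁ ⊕ A₂ =>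
          degA (bcomp E₁ E₂) a + if a = Sum.inl x then 1 else 0)
        (fun b : B₁ ⊕ B₂ =>
          degB (bcomp E₁ E₂) b + if b = Sum.inr y then 1 else 0) := by
  refine ⟨not_altCycleOn_bcomp E₁ E₂ x y, ?_⟩
  rintro ⟨E, hA, hB⟩
  have hA₂ : ∑ a : A₂, degA E (Sum.inr a) = ∑ a : A₂, degA E₂ a :=
    sum_congr rfl fun a _ => by simp [hA, degA_bcomp_inr]
  have hB₂ : ∑ b : B₂, degB E (Sum.inr b) =
      Fintype.card B₂ * Fintype.card A₁ + ∑ b : B₂, degB E₂ b + 1 := by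
    simp only [hB, degB_bcomp_inr, Sum.inr.injEq, sum_add_distrib, sum_const, card_univ,
      smul_eq_mul, sum_ite_eq', mem_univ, if_true]
  have := sum_degB_inr_le E
  rw [hA₂, hB₂, sum_degA_eq_sum_degB] at this
  omega
end

section
/- Let d be an indecomposable bipartite degree sequence on classes A, B and G a realization of d. Then for every x ∈ A and y ∈ B with xy ∈ E(G), the bipartite degree sequence d + 𝟙_x + 𝟙_y is graphic; consequently, every degree sequence d' with ‖d'−d‖₁ = 2 and equal degree sums on the two sides is graphic. -/
/-- `E` is a Tyshkevich composition of two non-empty bipartite graphs: there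
are `S ⊆ A`, `T ⊆ B` (first factor) such that all edges from `S` to the
complement of `T` are present and no edges from the complement of `S` to `T`
are present, with both factors non-empty. -/
def Decomposable {A B : Type*} [Fintype A] [Fintype B]
    (E : A → B → Bool) : Prop :=
  ∃ (S : Finset A) (T : Finset B),
    (S.Nonempty ∨ T.Nonempty) ∧ (S ≠ Finset.univ ∨ T ≠ Finset.univ) ∧
    (∀ a ∈ S, ∀ b, b ∉ T → E a b = true) ∧
    (∀ a, a ∉ S → ∀ b ∈ T, E a b = false)

set_option linter.unusedSectionVars false

section Basic
variable {A B : Type*} [Fintype A] [Fintype B] [DecidableEq A] [DecidableEq B]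

/-- point update of a bipartite adjacency function -/
def pu (E : A → B → Bool) (x : A) (y : B) (v : Bool) : A → B → Bool :=
  fun a b => if a = x ∧ b = y then v else E a b

lemma pu_eval_ne (E : A → B → Bool) (x : A) (y : B) (v : Bool) {a b}
    (h : ¬(a = x ∧ b = y)) : pu E x y v a b = E a b := by
  simp [pu, h]

lemma pu_eval_self (E : A → B → Bool) (x : A) (y : B) (v : Bool) :
    pu E x y v x y = v := by simp [pu]

lemma degA_eq_sum (E : A → B → Bool) (a : A) :
    degA E a = ∑ b, if E a b = true then 1 else 0 := by
  unfold degA; rw [Finset.card_filter]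

lemma degB_eq_sum (E : A → B → Bool) (b : B) :
    degB E b = ∑ a, if E a b = true then 1 else 0 := by
  unfold degB; rw [Finset.card_filter]

lemma degA_pu_ne (E : A → B → Bool) (x : A) (y : B) (v : Bool) {a : A} (h : a ≠ x) :
    degA (pu E x y v) a = degA E a := by
  unfold degA
  congr 1
  apply Finset.filter_congr
  intro b _
  simp [pu, h]

lemma degB_pu_ne (E : A → B → Bool) (x : A) (y : B) (v : Bool) {b : B} (h : b ≠ y) :
    degB (pu E x y v) b = degB E b := by
  unfold degB
  congr 1
  apply Finset.filter_congr
  intro a _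
  simp [pu, h]

lemma degA_pu_self (E : A → B → Bool) (x : A) (y : B) (v : Bool) :
    degA (pu E x y v) x + (if E x y = true then 1 else 0)
      = degA E x + (if v = true then 1 else 0) := by
  rw [degA_eq_sum, degA_eq_sum]
  rw [← Finset.sum_erase_add _ _ (Finset.mem_univ y),
      ← Finset.sum_erase_add _ _ (Finset.mem_univ y)]
  have h1 : ∀ b ∈ Finset.univ.erase y,
      (if pu E x y v x b = true then 1 else 0) = (if E x b = true then 1 else 0) := by
    intro b hb
    have : b ≠ y := Finset.ne_of_mem_erase hb
    simp [pu, this]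
  rw [Finset.sum_congr rfl h1, pu_eval_self]
  omega

lemma degB_pu_self (E : A → B → Bool) (x : A) (y : B) (v : Bool) :
    degB (pu E x y v) y + (if E x y = true then 1 else 0)
      = degB E y + (if v = true then 1 else 0) := by
  rw [degB_eq_sum, degB_eq_sum]
  rw [← Finset.sum_erase_add _ _ (Finset.mem_univ x),
      ← Finset.sum_erase_add _ _ (Finset.mem_univ x)]
  have h1 : ∀ a ∈ Finset.univ.erase x,
      (if pu E x y v a y = true then 1 else 0) = (if E a y = true then 1 else 0) := by
    intro a ha
    have : a ≠ x := Finset.ne_of_mem_erase ha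
    simp [pu, this]
  rw [Finset.sum_congr rfl h1, pu_eval_self]
  omega

lemma degA_pos_of_edge {E : A → B → Bool} {a : A} {b : B} (h : E a b = true) :
    1 ≤ degA E a := by
  have : b ∈ Finset.univ.filter fun b => E a b = true := by simp [h]
  have := Finset.card_pos.mpr ⟨b, this⟩
  simpa [degA] using this

lemma degB_pos_of_edge {E : A → B → Bool} {a : A} {b : B} (h : E a b = true) :
    1 ≤ degB E b := by
  have : a ∈ Finset.univ.filter fun a => E a b = true := by simp [h]
  have := Finset.card_pos.mpr ⟨a, this⟩
  simpa [degB] using this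

end Basic

section Chain
variable {A B : Type*} [Fintype A] [Fintype B] [DecidableEq A] [DecidableEq B]

/-- Alternating chain of length `n` from `x` to `y`: a sequence of flips
(nonedge from current A-vertex, then an edge) ending with a nonedge into `y`. -/
def ChainN (E : A → B → Bool) : ℕ → A → B → Prop
  | 0, x, y => E x y = false
  | n+1, x, y => ∃ a b, E x b = false ∧ E a b = true ∧ ChainN E n a y

lemma chainN_zero {E : A → B → Bool} {x y} : ChainN E 0 x y ↔ E x y = false := Iff.rfl

lemma chainN_succ {E : A → B → Bool} {n x y} :
    ChainN E (n+1) x y ↔ ∃ a b, E x b = false ∧ E a b = true ∧ ChainN E n a y := Iff.rfl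

lemma chain_extend (E : A → B → Bool) {a : A} {b b₂ : B} :
    ∀ n x, ChainN E n x b → E a b = true → E a b₂ = false → ChainN E (n+1) x b₂ := by
  intro n
  induction n with
  | zero => intro x h h1 h2; exact ⟨a, b, h, h1, h2⟩
  | succ n ih =>
    intro x h h1 h2
    obtain ⟨a', b', hxb', ha'b', hc⟩ := h
    exact ⟨a', b', hxb', ha'b', ih a' hc h1 h2⟩

lemma transfer (E : A → B → Bool) (x : A) (b₁ : B) (a₁ : A)
    (hx : E x b₁ = false) (ha : E a₁ b₁ = true) :
    ∀ n a y, ChainN E n a y →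
      ChainN (pu (pu E x b₁ true) a₁ b₁ false) n a y
      ∨ (∃ m ≤ n, ChainN E m x y)
      ∨ (∃ m < n, ChainN E m a₁ y) := by
  intro n
  induction n with
  | zero =>
    intro a y h
    rw [chainN_zero] at h
    by_cases hxy : a = x ∧ y = b₁
    · obtain ⟨rfl, rfl⟩ := hxy
      exact Or.inr (Or.inl ⟨0, le_rfl, hx⟩)
    · left
      rw [chainN_zero]
      have h2 : ¬(a = a₁ ∧ y = b₁) := by
        rintro ⟨rfl, rfl⟩; rw [h] at ha; simp at ha
      rw [pu_eval_ne _ _ _ _ h2, pu_eval_ne _ _ _ _ hxy]; exact h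
  | succ n ih =>
    intro a y h
    obtain ⟨a₂, b₂, h1, h2, hc⟩ := h
    by_cases c1 : a = x ∧ b₂ = b₁
    · right; left
      refine ⟨n+1, le_rfl, ?_⟩
      rw [← c1.1]; exact ⟨a₂, b₂, h1, h2, hc⟩
    · by_cases c2 : a₂ = a₁ ∧ b₂ = b₁
      · right; right
        refine ⟨n, Nat.lt_succ_self n, ?_⟩
        rw [← c2.1]; exact hc
      · rcases ih a₂ y hc with h' | h' | h'
        · left
          refine ⟨a₂, b₂, ?_, ?_, h'⟩
          · have hne : ¬(a = a₁ ∧ b₂ = b₁) := by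
              rintro ⟨rfl, rfl⟩; rw [h1] at ha; simp at ha
            rw [pu_eval_ne _ _ _ _ hne, pu_eval_ne _ _ _ _ c1]; exact h1
          · have hne : ¬(a₂ = x ∧ b₂ = b₁) := by
              rintro ⟨rfl, rfl⟩; rw [h2] at hx; simp at hx
            rw [pu_eval_ne _ _ _ _ c2, pu_eval_ne _ _ _ _ hne]; exact h2
        · obtain ⟨m, hm, hcm⟩ := h'
          exact Or.inr (Or.inl ⟨m, le_trans hm (Nat.le_succ n), hcm⟩)
        · obtain ⟨m, hm, hcm⟩ := h'
          exact Or.inr (Or.inr ⟨m, lt_trans hm (Nat.lt_succ_self n), hcm⟩)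

lemma realizes_pu_true {E : A → B → Bool} {rA rB} (hE : Realizes E rA rB) {x y}
    (h : E x y = false) :
    Realizes (pu E x y true) (fun a => rA a + if a = x then 1 else 0)
      (fun b => rB b + if b = y then 1 else 0) := by
  constructor
  · intro a
    by_cases hax : a = x
    · subst hax
      have h1 := degA_pu_self E a y true
      rw [h] at h1
      simp at h1
      have h2 := hE.1 a
      simp
      omega
    · rw [degA_pu_ne _ _ _ _ hax, hE.1 a]; simp [hax]
  · intro b
    by_cases hby : b = y
    · subst hby
      have h1 := degB_pu_self E x b true
      rw [h] at h1
      simp at h1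
      have h2 := hE.2 b
      simp
      omega
    · rw [degB_pu_ne _ _ _ _ hby, hE.2 b]; simp [hby]

lemma realizes_double {E : A → B → Bool} {rA rB} (hE : Realizes E rA rB)
    {x a₁ : A} {b₁ : B} (hxa : x ≠ a₁) (h1 : E x b₁ = false) (h2 : E a₁ b₁ = true) :
    Realizes (pu (pu E x b₁ true) a₁ b₁ false)
      (fun a => if a = a₁ then rA a - 1 else rA a + if a = x then 1 else 0) rB := by
  have hval : pu E x b₁ true a₁ b₁ = true := by
    rw [pu_eval_ne _ _ _ _ (by rintro ⟨rfl, -⟩; exact hxa rfl)]; exact h2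
  constructor
  · intro a
    by_cases haa : a = a₁
    · subst haa
      have hd := degA_pu_self (pu E x b₁ true) a b₁ false
      rw [hval] at hd
      simp at hd
      have hd2 : degA (pu E x b₁ true) a = rA a := by
        rw [degA_pu_ne _ _ _ _ (fun hh => hxa hh.symm), hE.1 a]
      simp
      omega
    · rw [degA_pu_ne _ _ _ _ haa]
      by_cases hax : a = x
      · subst hax
        have hd := degA_pu_self E a b₁ true
        rw [h1] at hd
        simp at hd
        have h3 := hE.1 a
        simp [haa]
        omega
      · rw [degA_pu_ne _ _ _ _ hax, hE.1 a]; simp [haa, hax]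
  · intro b
    by_cases hbb : b = b₁
    · subst hbb
      have hd := degB_pu_self (pu E x b true) a₁ b false
      rw [hval] at hd
      simp at hd
      have hd2 := degB_pu_self E x b true
      rw [h1] at hd2
      simp at hd2
      have h3 := hE.2 b
      omega
    · rw [degB_pu_ne _ _ _ _ hbb, degB_pu_ne _ _ _ _ hbb, hE.2 b]

lemma chain_graphic :
    ∀ n (E : A → B → Bool) (rA : A → ℕ) (rB : B → ℕ) (x : A) (y : B),
      Realizes E rA rB → ChainN E n x y →
      BipGraphic (fun a => rA a + if a = x then 1 else 0)
        (fun b => rB b + if b = y then 1 else 0) := by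
  intro n
  induction n using Nat.strong_induction_on with
  | _ n ih =>
    intro E rA rB x y hE hc
    cases n with
    | zero =>
      rw [chainN_zero] at hc
      exact ⟨pu E x y true, realizes_pu_true hE hc⟩
    | succ n =>
      obtain ⟨a₁, b₁, h1, h2, hc'⟩ := hc
      have hxa : x ≠ a₁ := by rintro rfl; rw [h1] at h2; simp at h2
      rcases transfer E x b₁ a₁ h1 h2 n a₁ y hc' with ht | ⟨m, hm, hcm⟩ | ⟨m, hm, hcm⟩
      · have hreal := realizes_double hE hxa h1 h2
        have hg := ih n (Nat.lt_succ_self n) _ _ _ a₁ y hreal ht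
        have h1A : 1 ≤ rA a₁ := by rw [← hE.1 a₁]; exact degA_pos_of_edge h2
        have hfun : (fun a => (if a = a₁ then rA a - 1 else rA a + if a = x then 1 else 0)
            + if a = a₁ then 1 else 0) = (fun a => rA a + if a = x then 1 else 0) := by
          funext a
          by_cases haa : a = a₁
          · subst haa; simp [Ne.symm hxa, (by rintro rfl; exact hxa rfl : a ≠ x)]; omega
          · simp [haa]
        rw [hfun] at hg
        exact hg
      · exact ih m (Nat.lt_succ_of_le hm) E rA rB x y hE hcm
      · exact ih (m+1) (Nat.succ_lt_succ hm) E rA rB x y hE ⟨a₁, b₁, h1, h2, hcm⟩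

end Chain

section Reach
variable {A B : Type*} [Fintype A] [Fintype B] [DecidableEq A] [DecidableEq B]

lemma reach_all {dA : A → ℕ} {dB : B → ℕ}
    (hind : ∀ E : A → B → Bool, Realizes E dA dB → ¬ Decomposable E)
    (E : A → B → Bool) (hE : Realizes E dA dB) (x : A) :
    (∀ a : A, a = x ∨ ∃ n b, ChainN E n x b ∧ E a b = true) ∧
    (∀ b : B, ∃ n, ChainN E n x b) := by
  classical
  by_contra hcon
  apply hind E hE
  refine ⟨Finset.univ.filter (fun a => a = x ∨ ∃ n b, ChainN E n x b ∧ E a b = true),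
    Finset.univ.filter (fun b => ∃ n, ChainN E n x b), ?_, ?_, ?_, ?_⟩
  · left; exact ⟨x, by simp⟩
  · rcases not_and_or.mp hcon with h | h
    · left
      intro hU
      apply h
      intro a
      have : a ∈ Finset.univ.filter
          (fun a => a = x ∨ ∃ n b, ChainN E n x b ∧ E a b = true) := by
        rw [hU]; exact Finset.mem_univ a
      exact (Finset.mem_filter.mp this).2
    · right
      intro hU
      apply h
      intro b
      have : b ∈ Finset.univ.filter (fun b => ∃ n, ChainN E n x b) := by
        rw [hU]; exact Finset.mem_univ b
      exact (Finset.mem_filter.mp this).2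
  · intro a ha b hb
    rw [Finset.mem_filter] at ha
    by_contra hfalse
    have hff : E a b = false := by
      cases h : E a b
      · rfl
      · exact absurd h hfalse
    apply hb
    rw [Finset.mem_filter]
    refine ⟨Finset.mem_univ b, ?_⟩
    rcases ha.2 with rfl | ⟨n, b₀, hc, he⟩
    · exact ⟨0, hff⟩
    · exact ⟨n + 1, chain_extend E n x hc he hff⟩
  · intro a ha b hb
    rw [Finset.mem_filter] at hb
    by_contra htrue
    have htt : E a b = true := by
      cases h : E a b
      · exact absurd h (by simpa using htrue)
      · rfl
    apply ha
    rw [Finset.mem_filter]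
    obtain ⟨n, hc⟩ := hb.2
    exact ⟨Finset.mem_univ a, Or.inr ⟨n, b, hc, htt⟩⟩

lemma add_one_one {dA : A → ℕ} {dB : B → ℕ}
    (hind : ∀ E : A → B → Bool, Realizes E dA dB → ¬ Decomposable E)
    (E : A → B → Bool) (hE : Realizes E dA dB) (x : A) (y : B) :
    BipGraphic (fun a => dA a + if a = x then 1 else 0)
      (fun b => dB b + if b = y then 1 else 0) := by
  obtain ⟨-, hT⟩ := reach_all hind E hE x
  obtain ⟨n, hc⟩ := hT y
  exact chain_graphic n E dA dB x y hE hc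

lemma spec_eq {rA : A → ℕ} {x x' : A} (hxx : x ≠ x') (rA'' : A → ℕ)
    (hspec : ∀ a, (rA'' a : ℤ)
      = rA a + (if a = x then 1 else 0) - (if a = x' then 1 else 0)) :
    (fun a => if a = x' then rA a - 1 else rA a + if a = x then 1 else 0) = rA'' := by
  funext a
  have h := hspec a
  by_cases c1 : a = x'
  · rw [if_pos c1]
    rw [if_pos c1, if_neg (fun hh => hxx (hh.symm.trans c1))] at h
    omega
  · rw [if_neg c1]
    rw [if_neg c1] at h
    by_cases c2 : a = x
    · rw [if_pos c2] at h; rw [if_pos c2]; omega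
    · rw [if_neg c2] at h; rw [if_neg c2]; omega

lemma spec_shift {rA : A → ℕ} {x a₁ x' : A} (hxa : x ≠ a₁) (hxx : x ≠ x')
    (h1A : 1 ≤ rA a₁) (rA'' : A → ℕ)
    (hspec : ∀ a, (rA'' a : ℤ)
      = rA a + (if a = x then 1 else 0) - (if a = x' then 1 else 0)) :
    ∀ a, (rA'' a : ℤ)
      = ((if a = a₁ then rA a - 1 else rA a + if a = x then 1 else 0 : ℕ) : ℤ)
        + (if a = a₁ then 1 else 0) - (if a = x' then 1 else 0) := by
  intro a
  have h := hspec a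
  by_cases c1 : a = a₁
  · have h1A' : 1 ≤ rA a := c1 ▸ h1A
    rw [if_pos c1, if_pos c1]
    rw [if_neg (fun hh => hxa (hh.symm.trans c1))] at h
    by_cases c3 : a = x'
    · rw [if_pos c3] at h ⊢; omega
    · rw [if_neg c3] at h ⊢; omega
  · rw [if_neg c1, if_neg c1]
    by_cases c2 : a = x
    · rw [if_pos c2] at h ⊢
      by_cases c3 : a = x'
      · exact absurd (c2.symm.trans c3) hxx
      · rw [if_neg c3] at h ⊢; omega
    · rw [if_neg c2] at h ⊢
      by_cases c3 : a = x'
      · rw [if_pos c3] at h ⊢; omega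
      · rw [if_neg c3] at h ⊢; omega

lemma chain_shift :
    ∀ n (E : A → B → Bool) (rA : A → ℕ) (rB : B → ℕ) (x : A) (y : B) (x' : A),
      Realizes E rA rB → ChainN E n x y → E x' y = true →
      ∀ rA'' : A → ℕ,
        (∀ a, (rA'' a : ℤ) = rA a + (if a = x then 1 else 0) - (if a = x' then 1 else 0)) →
        BipGraphic rA'' rB := by
  intro n
  induction n using Nat.strong_induction_on with
  | _ n ih =>
    intro E rA rB x y x' hE hc hx' rA'' hspec
    by_cases hxx : x = x'
    · subst hxx
      have hfun : rA'' = rA := by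
        funext a
        have h := hspec a
        by_cases c : a = x
        · rw [if_pos c] at h; omega
        · rw [if_neg c] at h; omega
      exact ⟨E, hfun ▸ hE⟩
    cases n with
    | zero =>
      rw [chainN_zero] at hc
      have hreal := realizes_double hE hxx hc hx'
      exact ⟨_, (spec_eq hxx rA'' hspec) ▸ hreal⟩
    | succ n =>
      obtain ⟨a₁, b₁, h1, h2, hc'⟩ := hc
      have hxa : x ≠ a₁ := by rintro rfl; rw [h1] at h2; simp at h2
      by_cases hcase : x' = a₁ ∧ y = b₁
      · obtain ⟨rfl, rfl⟩ := hcase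
        have hreal := realizes_double hE hxa h1 h2
        exact ⟨_, (spec_eq hxx rA'' hspec) ▸ hreal⟩
      · have e2 : ¬(x' = x ∧ y = b₁) := fun h => hxx h.1.symm
        have hx'E' : pu (pu E x b₁ true) a₁ b₁ false x' y = true := by
          rw [pu_eval_ne _ _ _ _ hcase, pu_eval_ne _ _ _ _ e2]; exact hx'
        rcases transfer E x b₁ a₁ h1 h2 n a₁ y hc' with ht | ⟨m, hm, hcm⟩ | ⟨m, hm, hcm⟩
        · have hreal := realizes_double hE hxa h1 h2
          have h1A : 1 ≤ rA a₁ := by rw [← hE.1 a₁]; exact degA_pos_of_edge h2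
          exact ih n (Nat.lt_succ_self n) _ _ _ a₁ y x' hreal ht hx'E' rA''
            (spec_shift hxa hxx h1A rA'' hspec)
        · exact ih m (Nat.lt_succ_of_le hm) E rA rB x y x' hE hcm hx' rA'' hspec
        · exact ih (m+1) (Nat.succ_lt_succ hm) E rA rB x y x' hE
            ⟨a₁, b₁, h1, h2, hcm⟩ hx' rA'' hspec

lemma shift_A {dA : A → ℕ} {dB : B → ℕ}
    (hind : ∀ E : A → B → Bool, Realizes E dA dB → ¬ Decomposable E)
    (E : A → B → Bool) (hE : Realizes E dA dB) (x x' : A) (rA'' : A → ℕ)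
    (hspec : ∀ a, (rA'' a : ℤ)
      = dA a + (if a = x then 1 else 0) - (if a = x' then 1 else 0)) :
    BipGraphic rA'' dB := by
  rcases (reach_all hind E hE x).1 x' with h | ⟨n, b, hc, he⟩
  · have hfun : rA'' = dA := by
      funext a
      have hs := hspec a
      rw [h] at hs
      by_cases c : a = x
      · rw [if_pos c] at hs; omega
      · rw [if_neg c] at hs; omega
    exact ⟨E, hfun ▸ hE⟩
  · exact chain_shift n E dA dB x b x' hE hc he rA'' hspec

end Reach

section Cpl
variable {A B : Type*} [Fintype A] [Fintype B] [DecidableEq A] [DecidableEq B]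

def cpl (E : A → B → Bool) : A → B → Bool := fun a b => !(E a b)

def tr (E : A → B → Bool) : B → A → Bool := fun b a => E a b

lemma degA_cpl (E : A → B → Bool) (a : A) :
    degA (cpl E) a + degA E a = Fintype.card B := by
  rw [degA_eq_sum, degA_eq_sum, ← Finset.sum_add_distrib]
  have h : ∀ b : B, ((if cpl E a b = true then 1 else 0) + if E a b = true then 1 else 0)
      = 1 := by
    intro b; cases hb : E a b <;> simp [cpl, hb]
  rw [Finset.sum_congr rfl (fun b _ => h b)]
  simp [Finset.card_univ]

lemma degB_cpl (E : A → B → Bool) (b : B) :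
    degB (cpl E) b + degB E b = Fintype.card A := by
  rw [degB_eq_sum, degB_eq_sum, ← Finset.sum_add_distrib]
  have h : ∀ a : A, ((if cpl E a b = true then 1 else 0) + if E a b = true then 1 else 0)
      = 1 := by
    intro a; cases ha : E a b <;> simp [cpl, ha]
  rw [Finset.sum_congr rfl (fun a _ => h a)]
  simp [Finset.card_univ]

lemma degA_le (E : A → B → Bool) (a : A) : degA E a ≤ Fintype.card B := by
  unfold degA
  exact le_trans (Finset.card_filter_le _ _) (le_of_eq (Finset.card_univ))

lemma degB_le (E : A → B → Bool) (b : B) : degB E b ≤ Fintype.card A := by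
  unfold degB
  exact le_trans (Finset.card_filter_le _ _) (le_of_eq (Finset.card_univ))

lemma realizes_tr {E : A → B → Bool} {dA dB} (hE : Realizes E dA dB) :
    Realizes (tr E) dB dA := ⟨hE.2, hE.1⟩

lemma compl_nonempty_of_ne_univ {S : Finset A} (h : S ≠ Finset.univ) : (Sᶜ).Nonempty := by
  rw [Finset.nonempty_iff_ne_empty]
  intro hc
  exact h (by simpa using congrArg (·ᶜ) hc)

lemma compl_ne_univ_of_nonempty {S : Finset A} (h : S.Nonempty) : Sᶜ ≠ Finset.univ := by
  obtain ⟨x, hx⟩ := h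
  intro hc
  have : x ∈ Sᶜ := hc ▸ Finset.mem_univ x
  rw [Finset.mem_compl] at this
  exact this hx

lemma decomp_cpl {E : A → B → Bool} (h : Decomposable E) : Decomposable (cpl E) := by
  obtain ⟨S, T, hne, hnuniv, h3, h4⟩ := h
  refine ⟨Sᶜ, Tᶜ, ?_, ?_, ?_, ?_⟩
  · rcases hnuniv with h | h
    · exact Or.inl (compl_nonempty_of_ne_univ h)
    · exact Or.inr (compl_nonempty_of_ne_univ h)
  · rcases hne with h | h
    · exact Or.inl (compl_ne_univ_of_nonempty h)
    · exact Or.inr (compl_ne_univ_of_nonempty h)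
  · intro a ha b hb
    rw [Finset.mem_compl] at ha
    rw [Finset.mem_compl, not_not] at hb
    have := h4 a ha b hb
    simp [cpl, this]
  · intro a ha b hb
    rw [Finset.mem_compl, not_not] at ha
    rw [Finset.mem_compl] at hb
    have := h3 a ha b hb
    simp [cpl, this]

lemma decomp_tr {E : A → B → Bool} (h : Decomposable E) : Decomposable (tr E) := by
  obtain ⟨S, T, hne, hnuniv, h3, h4⟩ := h
  refine ⟨Tᶜ, Sᶜ, ?_, ?_, ?_, ?_⟩
  · rcases hnuniv with h | h
    · exact Or.inr (compl_nonempty_of_ne_univ h)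
    · exact Or.inl (compl_nonempty_of_ne_univ h)
  · rcases hne with h | h
    · exact Or.inr (compl_ne_univ_of_nonempty h)
    · exact Or.inl (compl_ne_univ_of_nonempty h)
  · intro b hb a ha
    rw [Finset.mem_compl] at hb
    rw [Finset.mem_compl, not_not] at ha
    exact h3 a ha b hb
  · intro b hb a ha
    rw [Finset.mem_compl, not_not] at hb
    rw [Finset.mem_compl] at ha
    exact h4 a ha b hb

lemma sub_one_one {dA : A → ℕ} {dB : B → ℕ}
    (hind : ∀ E : A → B → Bool, Realizes E dA dB → ¬ Decomposable E)
    (E : A → B → Bool) (hE : Realizes E dA dB) (x : A) (y : B)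
    (dA'' : A → ℕ) (dB'' : B → ℕ)
    (hsA : ∀ a, (dA'' a : ℤ) = dA a - (if a = x then 1 else 0))
    (hsB : ∀ b, (dB'' b : ℤ) = dB b - (if b = y then 1 else 0)) :
    BipGraphic dA'' dB'' := by
  have hcE : Realizes (cpl E) (fun a => Fintype.card B - dA a)
      (fun b => Fintype.card A - dB b) := by
    constructor
    · intro a
      have h1 := degA_cpl E a
      have h2 := hE.1 a
      have h3 := degA_le E a
      dsimp only
      omega
    · intro b
      have h1 := degB_cpl E b
      have h2 := hE.2 b
      have h3 := degB_le E b
      dsimp only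
      omega
  have hindc : ∀ F : A → B → Bool,
      Realizes F (fun a => Fintype.card B - dA a) (fun b => Fintype.card A - dB b) →
      ¬ Decomposable F := by
    intro F hF hdec
    have hFc : Realizes (cpl F) dA dB := by
      constructor
      · intro a
        have h1 := degA_cpl F a
        have h2 := hF.1 a
        have h3 : dA a ≤ Fintype.card B := by rw [← hE.1 a]; exact degA_le E a
        dsimp only at h2
        omega
      · intro b
        have h1 := degB_cpl F b
        have h2 := hF.2 b
        have h3 : dB b ≤ Fintype.card A := by rw [← hE.2 b]; exact degB_le E b
        dsimp only at h2
        omega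
    exact hind (cpl F) hFc (decomp_cpl hdec)
  obtain ⟨H, hH⟩ := add_one_one hindc (cpl E) hcE x y
  refine ⟨cpl H, ?_, ?_⟩
  · intro a
    have h1 := degA_cpl H a
    have h2 := hH.1 a
    have h3 := hsA a
    have h4 : dA a ≤ Fintype.card B := by rw [← hE.1 a]; exact degA_le E a
    dsimp only at h2
    by_cases c : a = x
    · rw [if_pos c] at h2 h3; omega
    · rw [if_neg c] at h2 h3; omega
  · intro b
    have h1 := degB_cpl H b
    have h2 := hH.2 b
    have h3 := hsB b
    have h4 : dB b ≤ Fintype.card A := by rw [← hE.2 b]; exact degB_le E b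
    dsimp only at h2
    by_cases c : b = y
    · rw [if_pos c] at h2 h3; omega
    · rw [if_neg c] at h2 h3; omega

lemma shift_B {dA : A → ℕ} {dB : B → ℕ}
    (hind : ∀ E : A → B → Bool, Realizes E dA dB → ¬ Decomposable E)
    (E : A → B → Bool) (hE : Realizes E dA dB) (y y' : B) (rB'' : B → ℕ)
    (hspec : ∀ b, (rB'' b : ℤ)
      = dB b + (if b = y then 1 else 0) - (if b = y' then 1 else 0)) :
    BipGraphic dA rB'' := by
  have hindt : ∀ F : B → A → Bool, Realizes F dB dA → ¬ Decomposable F := by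
    intro F hF hdec
    exact hind (tr F) (realizes_tr hF) (decomp_tr hdec)
  obtain ⟨H, hH⟩ := shift_A hindt (tr E) (realizes_tr hE) y y' rB'' hspec
  exact ⟨tr H, hH.2, hH.1⟩

lemma sum_deg_eq (E : A → B → Bool) : ∑ a, degA E a = ∑ b, degB E b := by
  simp only [degA_eq_sum, degB_eq_sum]
  exact Finset.sum_comm

end Cpl

section Count
variable {ι : Type*} [DecidableEq ι]

lemma sum_one_aux (s : Finset ι) (w : ι → ℕ) (h : ∑ i ∈ s, w i = 1) :
    ∃ i ∈ s, w i = 1 ∧ ∀ j ∈ s, j ≠ i → w j = 0 := by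
  have hex : ∃ i ∈ s, w i ≠ 0 := by
    by_contra hc
    push_neg at hc
    rw [Finset.sum_eq_zero hc] at h
    omega
  obtain ⟨i, his, hi⟩ := hex
  have hsum := Finset.add_sum_erase s w his
  have hle : w i ≤ 1 := by omega
  have hz : ∀ j ∈ s.erase i, w j = 0 := by
    intro j hj
    have := Finset.single_le_sum (f := w) (fun k _ => Nat.zero_le _) hj
    omega
  exact ⟨i, his, by omega, fun j hjs hji => hz j (Finset.mem_erase.mpr ⟨hji, hjs⟩)⟩

lemma sum_two_aux (s : Finset ι) (w : ι → ℕ) (h : ∑ i ∈ s, w i = 2) :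
    (∃ i ∈ s, w i = 2 ∧ ∀ j ∈ s, j ≠ i → w j = 0)
    ∨ ∃ i ∈ s, ∃ j ∈ s, i ≠ j ∧ w i = 1 ∧ w j = 1 ∧
        ∀ k ∈ s, k ≠ i → k ≠ j → w k = 0 := by
  have hex : ∃ i ∈ s, w i ≠ 0 := by
    by_contra hc
    push_neg at hc
    rw [Finset.sum_eq_zero hc] at h
    omega
  obtain ⟨i, his, hi⟩ := hex
  have hsum := Finset.add_sum_erase s w his
  have hle : w i ≤ 2 := by omega
  rcases Nat.lt_or_ge (w i) 2 with hlt | hge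
  · -- w i = 1
    have hwi : w i = 1 := by omega
    have h1 : ∑ j ∈ s.erase i, w j = 1 := by omega
    obtain ⟨j, hjs, hj1, hz⟩ := sum_one_aux (s.erase i) w h1
    refine Or.inr ⟨i, his, j, Finset.mem_of_mem_erase hjs, ?_, hwi, hj1, ?_⟩
    · exact fun hij => (Finset.mem_erase.mp hjs).1 hij.symm
    · intro k hks hki hkj
      exact hz k (Finset.mem_erase.mpr ⟨hki, hks⟩) hkj
  · have hwi : w i = 2 := by omega
    have h0 : ∑ j ∈ s.erase i, w j = 0 := by omega
    refine Or.inl ⟨i, his, hwi, fun j hjs hji => ?_⟩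
    rw [Finset.sum_eq_zero_iff] at h0
    exact h0 j (Finset.mem_erase.mpr ⟨hji, hjs⟩)

end Count

/-- If `d = (dA; dB)` is an indecomposable bipartite degree sequence and `G`
is a realization of it, then for every edge `xy` of `G` the sequence
`d + 𝟙_x + 𝟙_y` is graphic; consequently every degree sequence at
`ℓ¹`-distance exactly `2` from `d` with equal degree sums is graphic. -/
theorem stmt_6 {A B : Type*} [Fintype A] [Fintype B]
    [DecidableEq A] [DecidableEq B]
    (dA : A → ℕ) (dB : B → ℕ)
    (hind : ∀ E : A → B → Bool, Realizes E dA dB → ¬ Decomposable E)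
    (E : A → B → Bool) (hE : Realizes E dA dB) :
    (∀ x y, E x y = true →
      BipGraphic (fun a => dA a + if a = x then 1 else 0)
        (fun b => dB b + if b = y then 1 else 0)) ∧
    (∀ (dA' : A → ℕ) (dB' : B → ℕ),
      (∑ a, |(dA' a : ℤ) - (dA a : ℤ)|) + (∑ b, |(dB' b : ℤ) - (dB b : ℤ)|) = 2 →
      (∑ a, dA' a) = (∑ b, dB' b) →
      BipGraphic dA' dB') := by
  constructor
  · intro x y _
    exact add_one_one hind E hE x y
  · intro dA' dB' hdist hsum
    -- set up integer discrepancy functions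
    set u : A → ℤ := fun a => (dA' a : ℤ) - dA a with hu
    set v : B → ℤ := fun b => (dB' b : ℤ) - dB b with hv
    have hsumd : ∑ a, dA a = ∑ b, dB b := by
      have h1 : ∀ a, degA E a = dA a := hE.1
      have h2 : ∀ b, degB E b = dB b := hE.2
      rw [← Finset.sum_congr rfl (fun a _ => h1 a),
          ← Finset.sum_congr rfl (fun b _ => h2 b)]
      exact sum_deg_eq E
    have hsumu : ∑ a, u a = ∑ b, v b := by
      have e1 : ∑ a, u a = ((∑ a, dA' a : ℕ) : ℤ) - ((∑ a, dA a : ℕ) : ℤ) := by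
        rw [hu, Finset.sum_sub_distrib]
        push_cast
        ring
      have e2 : ∑ b, v b = ((∑ b, dB' b : ℕ) : ℤ) - ((∑ b, dB b : ℕ) : ℤ) := by
        rw [hv, Finset.sum_sub_distrib]
        push_cast
        ring
      rw [e1, e2, hsum, hsumd]
    -- natAbs weights
    have habs : ∑ a, (u a).natAbs + ∑ b, (v b).natAbs = 2 := by
      have : ((∑ a, (u a).natAbs + ∑ b, (v b).natAbs : ℕ) : ℤ) = 2 := by
        push_cast
        rw [← hdist]
      exact_mod_cast this
    have hcase : (∑ a, (u a).natAbs = 2 ∧ ∑ b, (v b).natAbs = 0)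
        ∨ (∑ a, (u a).natAbs = 1 ∧ ∑ b, (v b).natAbs = 1)
        ∨ (∑ a, (u a).natAbs = 0 ∧ ∑ b, (v b).natAbs = 2) := by omega
    rcases hcase with ⟨h2A, h0B⟩ | ⟨h1A, h1B⟩ | ⟨h0A, h2B⟩
    · -- all change on the A side
      have hvz : ∀ b, v b = 0 := by
        intro b
        have h1 := Finset.single_le_sum (f := fun b => (v b).natAbs)
          (fun _ _ => Nat.zero_le _) (Finset.mem_univ b)
        rw [h0B] at h1
        omega
      have hdBeq : dB' = dB := by
        funext b
        have h1 : (dB' b : ℤ) - dB b = 0 := hvz b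
        omega
      have hsumu0 : ∑ a, u a = 0 := by
        rw [hsumu]
        exact Finset.sum_eq_zero (fun b _ => hvz b)
      rcases sum_two_aux Finset.univ (fun a => (u a).natAbs) h2A with
        ⟨i, -, hi2, hz⟩ | ⟨i, -, j, -, hij, hi1, hj1, hz⟩
      · exfalso
        have hs : ∑ a, u a = u i := Fintype.sum_eq_single i
          (fun k hk => Int.natAbs_eq_zero.mp (hz k (Finset.mem_univ k) hk))
        rw [hsumu0] at hs
        rw [← hs] at hi2
        simp at hi2
      · have hs : ∑ a, u a = u i + u j := Fintype.sum_eq_add i j hij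
          (fun k hk => Int.natAbs_eq_zero.mp (hz k (Finset.mem_univ k) hk.1 hk.2))
        rw [hsumu0] at hs
        have hz' : ∀ k, k ≠ i → k ≠ j → u k = 0 :=
          fun k hki hkj => Int.natAbs_eq_zero.mp (hz k (Finset.mem_univ k) hki hkj)
        rcases Int.natAbs_eq_iff.mp hi1 with hui | hui
        · -- u i = 1, u j = -1
          have huj : u j = -1 := by omega
          have hspecA : ∀ a, (dA' a : ℤ)
              = dA a + (if a = i then 1 else 0) - (if a = j then 1 else 0) := by
            intro a
            have hua : (dA' a : ℤ) - dA a = u a := rfl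
            by_cases c1 : a = i
            · rw [if_pos c1, if_neg (fun h => hij (c1.symm.trans h))]
              have h1 : u a = 1 := by rw [c1]; exact hui
              omega
            · rw [if_neg c1]
              by_cases c2 : a = j
              · rw [if_pos c2]
                have h1 : u a = -1 := by rw [c2]; exact huj
                omega
              · rw [if_neg c2]
                have h1 : u a = 0 := hz' a c1 c2
                omega
          rw [hdBeq]
          exact shift_A hind E hE i j dA' hspecA
        · -- u i = -1, u j = 1
          have huj : u j = 1 := by omega
          have hspecA : ∀ a, (dA' a : ℤ)
              = dA a + (if a = j then 1 else 0) - (if a = i then 1 else 0) := by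
            intro a
            have hua : (dA' a : ℤ) - dA a = u a := rfl
            by_cases c1 : a = j
            · rw [if_pos c1, if_neg (fun h => hij (h.symm.trans c1))]
              have h1 : u a = 1 := by rw [c1]; exact huj
              omega
            · rw [if_neg c1]
              by_cases c2 : a = i
              · rw [if_pos c2]
                have h1 : u a = -1 := by rw [c2]; exact hui
                omega
              · rw [if_neg c2]
                have h1 : u a = 0 := hz' a c2 c1
                omega
          rw [hdBeq]
          exact shift_A hind E hE j i dA' hspecA
    · -- one change on each side
      obtain ⟨x, -, hx1, hzA⟩ := sum_one_aux Finset.univ (fun a => (u a).natAbs) h1A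
      obtain ⟨y, -, hy1, hzB⟩ := sum_one_aux Finset.univ (fun b => (v b).natAbs) h1B
      have hzA' : ∀ k, k ≠ x → u k = 0 :=
        fun k hk => Int.natAbs_eq_zero.mp (hzA k (Finset.mem_univ k) hk)
      have hzB' : ∀ k, k ≠ y → v k = 0 :=
        fun k hk => Int.natAbs_eq_zero.mp (hzB k (Finset.mem_univ k) hk)
      have hsx : ∑ a, u a = u x := Fintype.sum_eq_single x hzA'
      have hsy : ∑ b, v b = v y := Fintype.sum_eq_single y hzB'
      have huv : u x = v y := by rw [← hsx, ← hsy]; exact hsumu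
      rcases Int.natAbs_eq_iff.mp hx1 with hux | hux
      · -- both +1
        have hvy : v y = 1 := by rw [← huv]; exact hux
        have hdA' : dA' = fun a => dA a + if a = x then 1 else 0 := by
          funext a
          have hua : (dA' a : ℤ) - dA a = u a := rfl
          by_cases c : a = x
          · rw [if_pos c]
            have h1 : u a = 1 := by rw [c]; exact hux
            omega
          · rw [if_neg c]
            have h1 : u a = 0 := hzA' a c
            omega
        have hdB' : dB' = fun b => dB b + if b = y then 1 else 0 := by
          funext b
          have hvb : (dB' b : ℤ) - dB b = v b := rfl
          by_cases c : b = y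
          · rw [if_pos c]
            have h1 : v b = 1 := by rw [c]; exact hvy
            omega
          · rw [if_neg c]
            have h1 : v b = 0 := hzB' b c
            omega
        rw [hdA', hdB']
        exact add_one_one hind E hE x y
      · -- both -1
        have hvy : v y = -1 := by rw [← huv]; exact hux
        refine sub_one_one hind E hE x y dA' dB' ?_ ?_
        · intro a
          have hua : (dA' a : ℤ) - dA a = u a := rfl
          by_cases c : a = x
          · rw [if_pos c]
            have h1 : u a = -1 := by rw [c]; exact hux
            omega
          · rw [if_neg c]
            have h1 : u a = 0 := hzA' a c
            omega
        · intro b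
          have hvb : (dB' b : ℤ) - dB b = v b := rfl
          by_cases c : b = y
          · rw [if_pos c]
            have h1 : v b = -1 := by rw [c]; exact hvy
            omega
          · rw [if_neg c]
            have h1 : v b = 0 := hzB' b c
            omega
    · -- all change on the B side
      have huz : ∀ a, u a = 0 := by
        intro a
        have h1 := Finset.single_le_sum (f := fun a => (u a).natAbs)
          (fun _ _ => Nat.zero_le _) (Finset.mem_univ a)
        rw [h0A] at h1
        omega
      have hdAeq : dA' = dA := by
        funext a
        have h1 : (dA' a : ℤ) - dA a = 0 := huz a
        omega
      have hsumv0 : ∑ b, v b = 0 := by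
        rw [← hsumu]
        exact Finset.sum_eq_zero (fun a _ => huz a)
      rcases sum_two_aux Finset.univ (fun b => (v b).natAbs) h2B with
        ⟨i, -, hi2, hz⟩ | ⟨i, -, j, -, hij, hi1, hj1, hz⟩
      · exfalso
        have hs : ∑ b, v b = v i := Fintype.sum_eq_single i
          (fun k hk => Int.natAbs_eq_zero.mp (hz k (Finset.mem_univ k) hk))
        rw [hsumv0] at hs
        rw [← hs] at hi2
        simp at hi2
      · have hs : ∑ b, v b = v i + v j := Fintype.sum_eq_add i j hij
          (fun k hk => Int.natAbs_eq_zero.mp (hz k (Finset.mem_univ k) hk.1 hk.2))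
        rw [hsumv0] at hs
        have hz' : ∀ k, k ≠ i → k ≠ j → v k = 0 :=
          fun k hki hkj => Int.natAbs_eq_zero.mp (hz k (Finset.mem_univ k) hki hkj)
        rcases Int.natAbs_eq_iff.mp hi1 with hvi | hvi
        · have hvj : v j = -1 := by omega
          have hspecB : ∀ b, (dB' b : ℤ)
              = dB b + (if b = i then 1 else 0) - (if b = j then 1 else 0) := by
            intro b
            have hvb : (dB' b : ℤ) - dB b = v b := rfl
            by_cases c1 : b = i
            · rw [if_pos c1, if_neg (fun h => hij (c1.symm.trans h))]
              have h1 : v b = 1 := by rw [c1]; exact hvi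
              omega
            · rw [if_neg c1]
              by_cases c2 : b = j
              · rw [if_pos c2]
                have h1 : v b = -1 := by rw [c2]; exact hvj
                omega
              · rw [if_neg c2]
                have h1 : v b = 0 := hz' b c1 c2
                omega
          rw [hdAeq]
          exact shift_B hind E hE i j dB' hspecB
        · have hvj : v j = 1 := by omega
          have hspecB : ∀ b, (dB' b : ℤ)
              = dB b + (if b = j then 1 else 0) - (if b = i then 1 else 0) := by
            intro b
            have hvb : (dB' b : ℤ) - dB b = v b := rfl
            by_cases c1 : b = j
            · rw [if_pos c1, if_neg (fun h => hij (h.symm.trans c1))]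
              have h1 : v b = 1 := by rw [c1]; exact hvj
              omega
            · rw [if_neg c1]
              by_cases c2 : b = i
              · rw [if_pos c2]
                have h1 : v b = -1 := by rw [c2]; exact hvi
                omega
              · rw [if_neg c2]
                have h1 : v b = 0 := hz' b c2 c1
                omega
          rw [hdAeq]
          exact shift_B hind E hE j i dB' hspecB
end

section
/- Let G and G' be simple graphs on the same vertex set whose degree sequences d, d' satisfy ‖d − d'‖₁ ≤ 2, and suppose G minimizes |E(G △ G')| among all realizations of d. Then G △ G' contains no cycle alternating between edges of G and edges of G'; equivalently, G △ G' is either empty or a single path. -/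
/-!
An alternating cycle `a 0, b 0, a 1, b 1, …` splits into the matchings `M = {a i b i}` inside
`G \ G'` and `N = {b i a (i+1)}` inside `G' \ G`, and every vertex has the same degree (one or
zero) in `M` and in `N`. Replacing `M` by `N` in `G` therefore keeps the degree sequence while
removing `|M| + |N| > 0` edges from `G △ G'`, against minimality.
-/

open Finset

theorem Finset.card_symmDiff_sdiff_union_add {α : Type*} [DecidableEq α] {A B X Y : Finset α}
    (hX : X ⊆ A \ B) (hY : Y ⊆ B \ A) :
    #(symmDiff ((A \ X) ∪ Y) B) + #X + #Y = #(symmDiff A B) := by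
  have hXY : Disjoint X Y :=
    disjoint_left.2 fun x hx hy => (mem_sdiff.1 (hX hx)).2 (mem_sdiff.1 (hY hy)).1
  have hsub : X ∪ Y ⊆ symmDiff A B := union_subset
    (hX.trans (subset_union_left (s₂ := B \ A))) (hY.trans (subset_union_right (s₁ := A \ B)))
  have heq : symmDiff ((A \ X) ∪ Y) B = symmDiff A B \ (X ∪ Y) := by
    ext x
    have := @hX x
    have := @hY x
    simp only [mem_symmDiff, mem_union, mem_sdiff] at *
    tauto
  rw [heq, add_assoc, ← card_union_of_disjoint hXY, card_sdiff_add_card_eq_card hsub]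

namespace SimpleGraph

variable {V : Type*}

def pairing {ι : Type*} (a b : ι → V) : SimpleGraph V :=
  fromEdgeSet (Set.range fun i => s(a i, b i))

section pairing

variable {ι : Type*} {a b : ι → V}

theorem pairing_adj {x y : V} :
    (pairing a b).Adj x y ↔ ∃ i, s(a i, b i) = s(x, y) ∧ x ≠ y := by
  simp [pairing]

theorem pairing_comm : pairing a b = pairing b a := by
  simp only [pairing, Sym2.eq_swap]

theorem pairing_adj_apply_left_iff (h : Function.Injective (Sum.elim a b)) (j : ι) (w : V) :
    (pairing a b).Adj (a j) w ↔ w = b j := by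
  have hab : ∀ i k, a i ≠ b k := fun i k e => Sum.inl_ne_inr (h e)
  simp only [pairing_adj, Sym2.eq_iff]
  constructor
  · rintro ⟨i, ⟨hi, rfl⟩ | ⟨-, hi⟩, -⟩
    · rw [h.comp Sum.inl_injective hi]
    · exact absurd hi.symm (hab j i)
  · rintro rfl
    exact ⟨j, Or.inl ⟨rfl, rfl⟩, hab j j⟩

theorem degree_pairing [Fintype V] [DecidableRel (pairing a b).Adj]
    (h : Function.Injective (Sum.elim a b)) (v : V) :
    (pairing a b).degree v = (Set.range (Sum.elim a b)).indicator 1 v := by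
  by_cases hv : v ∈ Set.range (Sum.elim a b)
  · rw [Set.indicator_of_mem hv, Pi.one_apply, degree_eq_one_iff_existsUnique_adj]
    obtain ⟨i | i, rfl⟩ := hv
    · exact ⟨b i, by simp [pairing_adj_apply_left_iff h]⟩
    · have h' : Function.Injective (Sum.elim b a) := by
        simpa using h.comp Sum.swap_leftInverse.injective
      exact ⟨a i, by simp [pairing_comm (a := a), pairing_adj_apply_left_iff h']⟩
  · rw [Set.indicator_of_notMem hv, degree_eq_zero]
    intro w hw
    obtain ⟨i, hi, -⟩ := pairing_adj.1 hw
    rw [Sym2.eq_iff] at hi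
    rcases hi with ⟨rfl, -⟩ | ⟨-, rfl⟩
    exacts [hv ⟨.inl i, rfl⟩, hv ⟨.inr i, rfl⟩]

theorem degree_pairing_comp_equiv [Fintype V] (σ : ι ≃ ι) [DecidableRel (pairing a b).Adj]
    [DecidableRel (pairing b (a ∘ σ)).Adj] (h : Function.Injective (Sum.elim a b))
    (v : V) : (pairing b (a ∘ σ)).degree v = (pairing a b).degree v := by
  let e : ι ⊕ ι ≃ ι ⊕ ι := (Equiv.sumComm ι ι).trans (Equiv.sumCongr σ (Equiv.refl ι))
  have he : Sum.elim b (a ∘ σ) = Sum.elim a b ∘ e := by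
    funext x
    cases x <;> rfl
  rw [degree_pairing h, degree_pairing (he ▸ h.comp e.injective), he,
    e.surjective.range_comp]

theorem pairing_le {H : SimpleGraph V} (h : ∀ i, H.Adj (a i) (b i)) : pairing a b ≤ H := by
  intro x y hxy
  obtain ⟨i, hi, -⟩ := pairing_adj.1 hxy
  rw [← mem_edgeSet, ← hi]
  exact h i

end pairing

variable [Fintype V] [DecidableEq V] {G G' M N : SimpleGraph V}
  [DecidableRel G.Adj] [DecidableRel G'.Adj] [DecidableRel M.Adj] [DecidableRel N.Adj]

theorem degree_sdiff_sup_add_degree (hM : M ≤ G) (hN : Disjoint N G) (v : V) :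
    ((G \ M) ⊔ N).degree v + M.degree v = G.degree v + N.degree v := by
  have hdisj : Disjoint (G \ M) N := hN.symm.mono_left sdiff_le
  have hsub : M.neighborFinset v ⊆ G.neighborFinset v := fun w hw => by
    simpa using hM (by simpa using hw)
  have hcard := card_sdiff_add_card_eq_card hsub
  rw [← card_neighborFinset_eq_degree, neighborFinset_sup_of_disjoint (h := hdisj),
    card_disjUnion, neighborFinset_sdiff]
  simp only [card_neighborFinset_eq_degree] at hcard ⊢
  omega

def IsClosestRealization (G G' : SimpleGraph V) [DecidableRel G.Adj] [DecidableRel G'.Adj] :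
    Prop :=
  ∀ (H : SimpleGraph V) [DecidableRel H.Adj], (∀ v, H.degree v = G.degree v) →
    #(symmDiff G.edgeFinset G'.edgeFinset) ≤ #(symmDiff H.edgeFinset G'.edgeFinset)

theorem IsClosestRealization.eq_bot_of_degree_eq (hG : G.IsClosestRealization G')
    (hM : M ≤ G \ G') (hN : N ≤ G' \ G) (hdeg : ∀ v, M.degree v = N.degree v) : M = ⊥ := by
  have hdegH v : ((G \ M) ⊔ N).degree v = G.degree v := by
    have := degree_sdiff_sup_add_degree (hM.trans sdiff_le)
      (disjoint_sdiff_self_left.mono_left hN) v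
    rw [hdeg] at this
    omega
  have hle := hG _ hdegH
  have hcard := card_symmDiff_sdiff_union_add
    (edgeFinset_sdiff (G₁ := G) (G₂ := G') ▸ edgeFinset_mono hM)
    (edgeFinset_sdiff (G₁ := G') (G₂ := G) ▸ edgeFinset_mono hN)
  simp only [edgeFinset_sup, edgeFinset_sdiff] at hle
  rw [← edgeFinset_eq_empty, ← card_eq_zero]
  omega

end SimpleGraph

theorem stmt_8_general {V : Type*} [Fintype V] [DecidableEq V]
    (G G' : SimpleGraph V) [DecidableRel G.Adj] [DecidableRel G'.Adj]
    (hmin : ∀ (H : SimpleGraph V) [DecidableRel H.Adj],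
      (∀ v, H.degree v = G.degree v) →
      (symmDiff G.edgeFinset G'.edgeFinset).card ≤
        (symmDiff H.edgeFinset G'.edgeFinset).card) :
    ¬ ∃ (m : ℕ) (a b : ZMod m → V), 2 ≤ m ∧
      Function.Injective (Sum.elim a b) ∧
      (∀ i, G.Adj (a i) (b i) ∧ ¬ G'.Adj (a i) (b i)) ∧
      (∀ i, G'.Adj (b i) (a (i + 1)) ∧ ¬ G.Adj (b i) (a (i + 1))) := by
  rintro ⟨m, a, b, -, hinj, hG, hG'⟩
  classical
  have hbot : SimpleGraph.pairing a b = ⊥ :=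
    SimpleGraph.IsClosestRealization.eq_bot_of_degree_eq hmin
      (SimpleGraph.pairing_le hG)
      (SimpleGraph.pairing_le (a := b) (b := a ∘ Equiv.addRight 1) hG')
      fun v => (SimpleGraph.degree_pairing_comp_equiv _ hinj v).symm
  simpa [hbot] using (SimpleGraph.pairing_adj_apply_left_iff hinj 0 (b 0)).2 rfl

/-- If `G` minimizes `|E(G △ G')|` among realizations of its degree sequence
`d`, where `‖d - d'‖₁ ≤ 2`, then `G △ G'` contains no cycle alternating
between edges of `G` and edges of `G'`. -/
theorem stmt_8 {V : Type*} [Fintype V] [DecidableEq V]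
    (G G' : SimpleGraph V) [DecidableRel G.Adj] [DecidableRel G'.Adj]
    (hdeg : (∑ v, |(G.degree v : ℤ) - (G'.degree v : ℤ)|) ≤ 2)
    (hmin : ∀ (H : SimpleGraph V) [DecidableRel H.Adj],
      (∀ v, H.degree v = G.degree v) →
      (symmDiff G.edgeFinset G'.edgeFinset).card ≤
        (symmDiff H.edgeFinset G'.edgeFinset).card) :
    ¬ ∃ (m : ℕ) (a b : ZMod m → V), 2 ≤ m ∧
      Function.Injective (Sum.elim a b) ∧
      (∀ i, G.Adj (a i) (b i) ∧ ¬ G'.Adj (a i) (b i)) ∧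
      (∀ i, G'.Adj (b i) (a (i + 1)) ∧ ¬ G.Adj (b i) (a (i + 1))) :=
  stmt_8_general G G' hmin
end

section
/- Let G be a bipartite graph on classes A, B, let x ∈ A, y ∈ B with xy ∉ E(G), and suppose the shortest alternating cycle covering xy in G has length 2ℓ+2. Label the cycle C − xy as a_1 = x, b_1, a_2, b_2, …, a_{ℓ+1}, b_{ℓ+1} = y where a_i, b_i are at distances 2i−2 and 2i−1 from x along C − xy. Then for all i, j: if i+1 ≥ j then a_i b_j ∈ E(G) whenever a_i b_j is an edge of C or forced, and if j ≤ i−2 then a_i b_j ∉ E(G); consequently the sets A' = {a_{3i−2} : 1 ≤ i ≤ ⌈ℓ/3⌉} and B' = {b_{3i−1} : 1 ≤ i ≤ ⌈ℓ/3⌉} induce a subgraph of G isomorphic to the half-graph H_0(⌈ℓ/3⌉). -/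
/-- An alternating cycle of length `2m` covering the non-edge `xy` of the
bipartite graph `E`, given by its `2m` vertices `a 1, b 1, …, a m, b m` with
`a 1 = x`, `b m = y`, edges `a i b i` and non-edges `b i a (i+1)` (the cycle
is closed by the non-edge `y x`). -/
def AltCycleCover {A B : Type*} (E : A → B → Bool) (x : A) (y : B) (m : ℕ) : Prop :=
  ∃ (a : ℕ → A) (b : ℕ → B),
    Set.InjOn a (Set.Icc 1 m) ∧ Set.InjOn b (Set.Icc 1 m) ∧
    a 1 = x ∧ b m = y ∧
    (∀ i ∈ Set.Icc 1 m, E (a i) (b i) = true) ∧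
    (∀ i ∈ Set.Icc 1 (m - 1), E (a (i + 1)) (b i) = false)

/-- If the shortest alternating cycle covering the non-edge `xy` has length
`2ℓ+2`, with vertices labelled `a 1 = x, b 1, a 2, …, a (ℓ+1), b (ℓ+1) = y`
along the cycle, then minimality forces the chord structure
(`a i b j` is an edge when `j + 2 ≤ i`, a non-edge when `i + 1 ≤ j`), and the
vertices `a (3i-2)`, `b (3j-1)` for `1 ≤ i, j ≤ ⌈ℓ/3⌉` induce a copy of the
half-graph `H₀(⌈ℓ/3⌉)` (adjacency exactly when `j < i`). -/
theorem stmt_9 {A B : Type*} (E : A → B → Bool) (x : A) (y : B)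
    (ℓ : ℕ) (hℓ : 1 ≤ ℓ) (hxy : E x y = false)
    (a : ℕ → A) (b : ℕ → B)
    (hainj : Set.InjOn a (Set.Icc 1 (ℓ + 1)))
    (hbinj : Set.InjOn b (Set.Icc 1 (ℓ + 1)))
    (ha1 : a 1 = x) (hby : b (ℓ + 1) = y)
    (hedge : ∀ i ∈ Set.Icc 1 (ℓ + 1), E (a i) (b i) = true)
    (hnon : ∀ i ∈ Set.Icc 1 ℓ, E (a (i + 1)) (b i) = false)
    (hmin : ∀ m, 1 ≤ m → AltCycleCover E x y m → ℓ + 1 ≤ m) :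
    (∀ i ∈ Set.Icc 1 (ℓ + 1), ∀ j ∈ Set.Icc 1 (ℓ + 1),
      j + 2 ≤ i → E (a i) (b j) = true) ∧
    (∀ i ∈ Set.Icc 1 (ℓ + 1), ∀ j ∈ Set.Icc 1 (ℓ + 1),
      i + 1 ≤ j → E (a i) (b j) = false) ∧
    (∀ i ∈ Set.Icc 1 ((ℓ + 2) / 3), ∀ j ∈ Set.Icc 1 ((ℓ + 2) / 3),
      (E (a (3 * i - 2)) (b (3 * j - 1)) = true ↔ j < i)) := by
  -- forward chords are non-edges
  have key2 : ∀ i j, 1 ≤ i → i + 1 ≤ j → j ≤ ℓ + 1 → E (a i) (b j) = false := by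
    intro i j hi hij hj
    by_contra hE
    rw [Bool.not_eq_false] at hE
    have hd1 : 1 ≤ j - i := by omega
    set d := j - i with hd
    set m := ℓ + 1 - d with hm
    have hdl : d ≤ ℓ := by omega
    have him : i ≤ m := by omega
    have hcyc : AltCycleCover E x y m := by
      refine ⟨fun k => if k ≤ i then a k else a (k + d),
              fun k => if k < i then b k else b (k + d), ?_, ?_, ?_, ?_, ?_, ?_⟩
      · intro k1 hk1 k2 hk2 heq
        simp only [Set.mem_Icc] at hk1 hk2
        by_cases h1 : k1 ≤ i <;> by_cases h2 : k2 ≤ i <;>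
          simp only [h1, h2, if_true, if_false, if_pos, if_neg] at heq <;>
          have := hainj (Set.mem_Icc.mpr (by omega)) (Set.mem_Icc.mpr (by omega)) heq <;>
          omega
      · intro k1 hk1 k2 hk2 heq
        simp only [Set.mem_Icc] at hk1 hk2
        by_cases h1 : k1 < i <;> by_cases h2 : k2 < i <;>
          simp only [h1, h2, if_true, if_false, if_pos, if_neg] at heq <;>
          have := hbinj (Set.mem_Icc.mpr (by omega)) (Set.mem_Icc.mpr (by omega)) heq <;>
          omega
      · beta_reduce; rw [if_pos hi]; exact ha1
      · beta_reduce
        rw [if_neg (by omega : ¬ m < i), show m + d = ℓ + 1 from by omega, hby]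
      · intro k hk
        simp only [Set.mem_Icc] at hk
        beta_reduce
        by_cases h1 : k < i
        · rw [if_pos (by omega : k ≤ i), if_pos h1]
          exact hedge k (Set.mem_Icc.mpr (by omega))
        · by_cases h2 : k ≤ i
          · rw [if_pos h2, if_neg h1, show k + d = j from by omega,
              show k = i from by omega]
            exact hE
          · rw [if_neg h2, if_neg h1]
            exact hedge (k + d) (Set.mem_Icc.mpr (by omega))
      · intro k hk
        simp only [Set.mem_Icc] at hk
        beta_reduce
        by_cases h1 : k < i
        · rw [if_pos (by omega : k + 1 ≤ i), if_pos h1]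
          exact hnon k (Set.mem_Icc.mpr (by omega))
        · rw [if_neg (by omega : ¬ k + 1 ≤ i), if_neg h1,
            show k + 1 + d = (k + d) + 1 from by omega]
          exact hnon (k + d) (Set.mem_Icc.mpr (by omega))
    have := hmin m (by omega) hcyc
    omega
  -- backward chords are edges
  have key1 : ∀ i j, 1 ≤ j → j + 2 ≤ i → i ≤ ℓ + 1 → E (a i) (b j) = true := by
    intro i j hj hij hi
    by_contra hE
    rw [Bool.not_eq_true] at hE
    have hd1 : 1 ≤ i - j - 1 := by omega
    set d := i - j - 1 with hd
    set m := ℓ + 1 - d with hm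
    have hdl : d ≤ ℓ := by omega
    have hjm : j + 1 ≤ m := by omega
    have hcyc : AltCycleCover E x y m := by
      refine ⟨fun k => if k ≤ j then a k else a (k + d),
              fun k => if k ≤ j then b k else b (k + d), ?_, ?_, ?_, ?_, ?_, ?_⟩
      · intro k1 hk1 k2 hk2 heq
        simp only [Set.mem_Icc] at hk1 hk2
        by_cases h1 : k1 ≤ j <;> by_cases h2 : k2 ≤ j <;>
          simp only [h1, h2, if_true, if_false, if_pos, if_neg] at heq <;>
          have := hainj (Set.mem_Icc.mpr (by omega)) (Set.mem_Icc.mpr (by omega)) heq <;>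
          omega
      · intro k1 hk1 k2 hk2 heq
        simp only [Set.mem_Icc] at hk1 hk2
        by_cases h1 : k1 ≤ j <;> by_cases h2 : k2 ≤ j <;>
          simp only [h1, h2, if_true, if_false, if_pos, if_neg] at heq <;>
          have := hbinj (Set.mem_Icc.mpr (by omega)) (Set.mem_Icc.mpr (by omega)) heq <;>
          omega
      · beta_reduce; rw [if_pos hj]; exact ha1
      · beta_reduce
        rw [if_neg (by omega : ¬ m ≤ j), show m + d = ℓ + 1 from by omega, hby]
      · intro k hk
        simp only [Set.mem_Icc] at hk
        beta_reduce
        by_cases h1 : k ≤ j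
        · rw [if_pos h1, if_pos h1]
          exact hedge k (Set.mem_Icc.mpr (by omega))
        · rw [if_neg h1, if_neg h1]
          exact hedge (k + d) (Set.mem_Icc.mpr (by omega))
      · intro k hk
        simp only [Set.mem_Icc] at hk
        beta_reduce
        by_cases h1 : k + 1 ≤ j
        · rw [if_pos h1, if_pos (by omega : k ≤ j)]
          exact hnon k (Set.mem_Icc.mpr (by omega))
        · by_cases h2 : k ≤ j
          · rw [if_neg h1, if_pos h2, show k + 1 + d = i from by omega,
              show k = j from by omega]
            exact hE
          · rw [if_neg h1, if_neg h2, show k + 1 + d = (k + d) + 1 from by omega]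
            exact hnon (k + d) (Set.mem_Icc.mpr (by omega))
    have := hmin m (by omega) hcyc
    omega
  refine ⟨?_, ?_, ?_⟩
  · intro i hi j hj hij
    simp only [Set.mem_Icc] at hi hj
    exact key1 i j (by omega) hij (by omega)
  · intro i hi j hj hij
    simp only [Set.mem_Icc] at hi hj
    exact key2 i j (by omega) hij (by omega)
  · intro i hi j hj
    simp only [Set.mem_Icc] at hi hj
    have h3i : 3 * i ≤ ℓ + 2 := by omega
    have h3j : 3 * j ≤ ℓ + 2 := by omega
    by_cases h : j < i
    · simp only [h, iff_true]
      exact key1 (3 * i - 2) (3 * j - 1) (by omega) (by omega) (by omega)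
    · have hne := key2 (3 * i - 2) (3 * j - 1) (by omega) (by omega) (by omega)
      simp [hne, h]
end

section
/- Let D be a class of bipartite degree sequences containing some α with non-empty first class and some β with non-empty second class, and let D̄ be its closure under Tyshkevich composition. Then D̄ is not P-stable: for d(r) = (α∘β)^{∘r}, there is a degree sequence d' with ‖d' − d(r)‖₁ = 2 such that |𝒢(d')| ≥ |𝒢(d(r))| · c^r for some constant c > 1, so no polynomial p can satisfy |𝒢(d')| ≤ p(n)·|𝒢(d(r))| for all r. -/
/-- A splitted bipartite degree sequence. -/
structure BipDeg where
  nA : ℕ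
  nB : ℕ
  dA : Fin nA → ℕ
  dB : Fin nB → ℕ

/-- The number of (labelled) bipartite realizations of a bipartite degree
sequence, `|𝒢(d)|`. -/
noncomputable def BipDeg.count (d : BipDeg) : ℕ :=
  Set.ncard {E : Fin d.nA → Fin d.nB → Bool |
    (∀ a, (Finset.univ.filter fun b => E a b = true).card = d.dA a) ∧
    (∀ b, (Finset.univ.filter fun a => E a b = true).card = d.dB b)}

/-- Tyshkevich composition of bipartite degree sequences: the first factor's
`A`-degrees grow by the size of the second factor's `B`-class, and the second
factor's `B`-degrees grow by the size of the first factor's `A`-class. -/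
def BipDeg.comp (d₁ d₂ : BipDeg) : BipDeg where
  nA := d₁.nA + d₂.nA
  nB := d₁.nB + d₂.nB
  dA := Fin.addCases (fun i => d₁.dA i + d₂.nB) (fun i => d₂.dA i)
  dB := Fin.addCases (fun i => d₁.dB i) (fun i => d₂.dB i + d₁.nA)

/-- `BipDeg.pow d r` is the `(r+1)`-fold Tyshkevich composition
`d ∘ d ∘ ⋯ ∘ d`. -/
def BipDeg.pow (d : BipDeg) : ℕ → BipDeg
  | 0 => d
  | r + 1 => d.comp (d.pow r)

/-!
Realizations are `Bool`-matrices with rows indexed by the class `A` and columns by `B`.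
If `∑ d₁.dA = ∑ d₁.dB` (e.g. `d₁` is graphic), then in a realization of `d₁ ∘ d₂` the rows
of `A₁` carry `∑ d₁.dA + |A₁||B₂|` entries and the columns of `B₁` carry `∑ d₁.dA`, so the
block `A₁ × B₂` is full and the block `A₂ × B₁` is empty. Thus the realizations of `d₁ ∘ d₂`
are exactly the glued pairs of realizations, and `|𝒢(d₁ ∘ d₂)| = |𝒢(d₁)| |𝒢(d₂)|`.

Let `γ = α ∘ β` and pick `a₀ ∈ A_α`, `b₀ ∈ B_β`; then `a₀ b₀` is an edge of every
realization of `γ`. Lower `d(0) = γ` at `(a₀, b₀)` and, inductively, `d(s+1) = γ ∘ d(s)` at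
`(a₀, b')`, where `(a', b')` is where `d(s)` was lowered. Given realizations `G` of `γ` and
`H` of the lowered `d(s)`, glue them and move one edge at `a₀` to `a'`: either the forced
edge `a₀ b₀`, or the edge from `a₀` to a non-neighbour of `a'` in `H`. Both results realize
the lowered `d(s+1)`, and `G`, `H` and the choice can be read back from them. So each step
multiplies the count of the lowered sequence by at least `2 |𝒢(γ)|`, that of `d(s)` by
exactly `|𝒢(γ)|`.
-/

open Finset

@[simp] theorem Fin.castAdd_ne_natAdd {m n : ℕ} (i : Fin m) (j : Fin n) :
    Fin.castAdd n i ≠ Fin.natAdd m j :=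
  Fin.ne_of_val_ne (by simp only [Fin.val_castAdd, Fin.val_natAdd]; omega)

@[simp] theorem Fin.natAdd_ne_castAdd {m n : ℕ} (i : Fin m) (j : Fin n) :
    Fin.natAdd m j ≠ Fin.castAdd n i :=
  (Fin.castAdd_ne_natAdd i j).symm

namespace BipDeg

section Matrix

variable {m n m₁ m₂ n₁ n₂ : ℕ}

def rowDeg (E : Fin m → Fin n → Bool) (a : Fin m) : ℕ := #{b | E a b = true}

def colDeg (E : Fin m → Fin n → Bool) (b : Fin n) : ℕ := #{a | E a b = true}

-- `d.count` is `{E | d.Realizes E}.ncard` by definition.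
def Realizes (d : BipDeg) (E : Fin d.nA → Fin d.nB → Bool) : Prop :=
  (∀ a, rowDeg E a = d.dA a) ∧ ∀ b, colDeg E b = d.dB b

theorem rowDeg_le (E : Fin m → Fin n → Bool) (a : Fin m) : rowDeg E a ≤ n :=
  (card_filter_le _ _).trans_eq (card_fin n)

theorem sum_rowDeg_eq_sum_colDeg (E : Fin m → Fin n → Bool) :
    ∑ a, rowDeg E a = ∑ b, colDeg E b := by
  simp only [rowDeg, colDeg, card_filter]
  exact sum_comm

theorem card_filter_fin_add (p : Fin (n₁ + n₂) → Prop) [DecidablePred p] :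
    #{i | p i} = #{i | p (Fin.castAdd n₂ i)} + #{i | p (Fin.natAdd n₁ i)} := by
  simp only [card_filter, Fin.sum_univ_add]

theorem rowDeg_fin_add (E : Fin m → Fin (n₁ + n₂) → Bool) (a : Fin m) :
    rowDeg E a = rowDeg (fun i j => E i (Fin.castAdd n₂ j)) a +
      rowDeg (fun i j => E i (Fin.natAdd n₁ j)) a :=
  card_filter_fin_add _

theorem colDeg_fin_add (E : Fin (m₁ + m₂) → Fin n → Bool) (b : Fin n) :
    colDeg E b = colDeg (fun i j => E (Fin.castAdd m₂ i) j) b +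
      colDeg (fun i j => E (Fin.natAdd m₁ i) j) b :=
  card_filter_fin_add _

/-- The adjacency matrix of the Tyshkevich composition of the graphs `G` and `H`. -/
def glue (G : Fin m₁ → Fin n₁ → Bool) (H : Fin m₂ → Fin n₂ → Bool) :
    Fin (m₁ + m₂) → Fin (n₁ + n₂) → Bool :=
  Fin.addCases (fun a => Fin.addCases (G a) fun _ => true)
    (fun a => Fin.addCases (fun _ => false) (H a))

section Glue

variable (G : Fin m₁ → Fin n₁ → Bool) (H : Fin m₂ → Fin n₂ → Bool)

@[simp] theorem glue_castAdd_castAdd (a : Fin m₁) (b : Fin n₁) :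
    glue G H (Fin.castAdd m₂ a) (Fin.castAdd n₂ b) = G a b := by simp [glue]

@[simp] theorem glue_castAdd_natAdd (a : Fin m₁) (b : Fin n₂) :
    glue G H (Fin.castAdd m₂ a) (Fin.natAdd n₁ b) = true := by simp [glue]

@[simp] theorem glue_natAdd_castAdd (a : Fin m₂) (b : Fin n₁) :
    glue G H (Fin.natAdd m₁ a) (Fin.castAdd n₂ b) = false := by simp [glue]

@[simp] theorem glue_natAdd_natAdd (a : Fin m₂) (b : Fin n₂) :
    glue G H (Fin.natAdd m₁ a) (Fin.natAdd n₁ b) = H a b := by simp [glue]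

theorem glue_inj {G' : Fin m₁ → Fin n₁ → Bool} {H' : Fin m₂ → Fin n₂ → Bool} :
    glue G H = glue G' H' ↔ G = G' ∧ H = H' := by
  refine ⟨fun h => ⟨?_, ?_⟩, fun ⟨hG, hH⟩ => hG ▸ hH ▸ rfl⟩ <;> funext a b
  · simpa using congrFun (congrFun h (Fin.castAdd m₂ a)) (Fin.castAdd n₂ b)
  · simpa using congrFun (congrFun h (Fin.natAdd m₁ a)) (Fin.natAdd n₁ b)

@[simp] theorem rowDeg_glue_castAdd (a : Fin m₁) :
    rowDeg (glue G H) (Fin.castAdd m₂ a) = rowDeg G a + n₂ := by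
  simp [rowDeg, card_filter_fin_add]

@[simp] theorem rowDeg_glue_natAdd (a : Fin m₂) :
    rowDeg (glue G H) (Fin.natAdd m₁ a) = rowDeg H a := by
  simp [rowDeg, card_filter_fin_add]

@[simp] theorem colDeg_glue_castAdd (b : Fin n₁) :
    colDeg (glue G H) (Fin.castAdd n₂ b) = colDeg G b := by
  simp [colDeg, card_filter_fin_add]

@[simp] theorem colDeg_glue_natAdd (b : Fin n₂) :
    colDeg (glue G H) (Fin.natAdd n₁ b) = colDeg H b + m₁ := by
  simp [colDeg, card_filter_fin_add, add_comm]

end Glue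

def setEntry (E : Fin m → Fin n → Bool) (a : Fin m) (b : Fin n) (v : Bool) :
    Fin m → Fin n → Bool :=
  fun i j => if i = a ∧ j = b then v else E i j

theorem card_filter_update_add (f : Fin n → Bool) (b : Fin n) (v : Bool) :
    #{j | Function.update f b v j = true} + (if f b = true then 1 else 0) =
      #{j | f j = true} + if v = true then 1 else 0 := by
  simp only [card_filter, ← add_sum_erase _ _ (mem_univ b), Function.update_self]
  have : ∑ j ∈ univ.erase b, (if Function.update f b v j = true then 1 else 0) =
      ∑ j ∈ univ.erase b, if f j = true then 1 else 0 :=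
    sum_congr rfl fun j hj => by rw [Function.update_of_ne (ne_of_mem_erase hj)]
  omega

theorem rowDeg_setEntry_add (E : Fin m → Fin n → Bool) (a : Fin m) (b : Fin n) (v : Bool)
    (i : Fin m) :
    rowDeg (setEntry E a b v) i + (if i = a ∧ E a b = true then 1 else 0) =
      rowDeg E i + if i = a ∧ v = true then 1 else 0 := by
  by_cases hi : i = a
  · subst hi
    have : setEntry E i b v i = Function.update (E i) b v := by
      funext j
      simp [setEntry, Function.update_apply]
    simpa [rowDeg, this] using card_filter_update_add (E i) b v
  · have : setEntry E a b v i = E i := by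
      funext j
      simp [setEntry, hi]
    simp [rowDeg, this, hi]

theorem colDeg_setEntry_add (E : Fin m → Fin n → Bool) (a : Fin m) (b : Fin n) (v : Bool)
    (j : Fin n) :
    colDeg (setEntry E a b v) j + (if j = b ∧ E a b = true then 1 else 0) =
      colDeg E j + if j = b ∧ v = true then 1 else 0 := by
  have htranspose : (fun j i => setEntry E a b v i j) = setEntry (fun j i => E i j) b a v := by
    funext j i
    simp [setEntry, and_comm]
  have := rowDeg_setEntry_add (fun j i => E i j) b a v j
  rwa [← htranspose] at this

def moveEntry (E : Fin m → Fin n → Bool) (x y : Fin m) (c : Fin n) : Fin m → Fin n → Bool :=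
  setEntry (setEntry E x c false) y c true

theorem moveEntry_apply (E : Fin m → Fin n → Bool) (x y : Fin m) (c : Fin n) (i : Fin m)
    (j : Fin n) :
    moveEntry E x y c i j =
      if i = y ∧ j = c then true else if i = x ∧ j = c then false else E i j :=
  rfl

variable {E : Fin m → Fin n → Bool} {x y : Fin m} {c : Fin n}

theorem moveEntry_apply_of_ne {i : Fin m} {j : Fin n} (hx : ¬(i = x ∧ j = c))
    (hy : ¬(i = y ∧ j = c)) : moveEntry E x y c i j = E i j := by
  rw [moveEntry_apply, if_neg hy, if_neg hx]

theorem rowDeg_moveEntry_add (hx : E x c = true) (hy : E y c = false) (i : Fin m) :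
    rowDeg (moveEntry E x y c) i + (if i = x then 1 else 0) =
      rowDeg E i + if i = y then 1 else 0 := by
  have hxy : x ≠ y := by rintro rfl; simp [hx] at hy
  have hyc : setEntry E x c false y c = false := by simp [setEntry, hxy.symm, hy]
  have h₁ := rowDeg_setEntry_add E x c false i
  have h₂ := rowDeg_setEntry_add (setEntry E x c false) y c true i
  simp only [hyc, hx, Bool.false_eq_true, and_true, and_false, if_false, add_zero] at h₁ h₂
  rw [moveEntry]
  omega

theorem colDeg_moveEntry (hx : E x c = true) (hy : E y c = false) :
    colDeg (moveEntry E x y c) = colDeg E := by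
  have hxy : x ≠ y := by rintro rfl; simp [hx] at hy
  have hyc : setEntry E x c false y c = false := by simp [setEntry, hxy.symm, hy]
  funext j
  have h₁ := colDeg_setEntry_add E x c false j
  have h₂ := colDeg_setEntry_add (setEntry E x c false) y c true j
  simp only [hyc, hx, Bool.false_eq_true, and_true, and_false, if_false, add_zero] at h₁ h₂
  rw [moveEntry]
  omega

end Matrix

theorem Realizes.sum_dA_eq_sum_dB {d : BipDeg} {E : Fin d.nA → Fin d.nB → Bool}
    (hE : d.Realizes E) : ∑ a, d.dA a = ∑ b, d.dB b := by
  simpa only [hE.1, hE.2] using sum_rowDeg_eq_sum_colDeg E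

theorem Realizes.dA_le {d : BipDeg} {E : Fin d.nA → Fin d.nB → Bool} (hE : d.Realizes E)
    (a : Fin d.nA) : d.dA a ≤ d.nB :=
  hE.1 a ▸ rowDeg_le E a

theorem Realizes.dA_pos {d : BipDeg} {E : Fin d.nA → Fin d.nB → Bool} (hE : d.Realizes E)
    {a : Fin d.nA} {b : Fin d.nB} (hab : E a b = true) : 0 < d.dA a :=
  hE.1 a ▸ card_pos.2 ⟨b, by simpa using hab⟩

theorem Realizes.dB_pos {d : BipDeg} {E : Fin d.nA → Fin d.nB → Bool} (hE : d.Realizes E)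
    {a : Fin d.nA} {b : Fin d.nB} (hab : E a b = true) : 0 < d.dB b :=
  hE.2 b ▸ card_pos.2 ⟨a, by simpa using hab⟩

theorem exists_realizes_of_count_pos {d : BipDeg} (h : 0 < d.count) : ∃ E, d.Realizes E :=
  Set.nonempty_of_ncard_ne_zero h.ne'

section Comp

variable {d₁ d₂ : BipDeg}

@[simp] theorem comp_dA_castAdd (a : Fin d₁.nA) :
    (d₁.comp d₂).dA (Fin.castAdd d₂.nA a) = d₁.dA a + d₂.nB := by simp [comp]

@[simp] theorem comp_dA_natAdd (a : Fin d₂.nA) :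
    (d₁.comp d₂).dA (Fin.natAdd d₁.nA a) = d₂.dA a := by simp [comp]

@[simp] theorem comp_dB_castAdd (b : Fin d₁.nB) :
    (d₁.comp d₂).dB (Fin.castAdd d₂.nB b) = d₁.dB b := by simp [comp]

@[simp] theorem comp_dB_natAdd (b : Fin d₂.nB) :
    (d₁.comp d₂).dB (Fin.natAdd d₁.nB b) = d₂.dB b + d₁.nA := by simp [comp]

theorem realizes_comp_glue_iff {G : Fin d₁.nA → Fin d₁.nB → Bool}
    {H : Fin d₂.nA → Fin d₂.nB → Bool} :
    (d₁.comp d₂).Realizes (glue G H) ↔ d₁.Realizes G ∧ d₂.Realizes H := by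
  constructor
  · rintro ⟨hrow, hcol⟩
    refine ⟨⟨fun a => ?_, fun b => ?_⟩, ⟨fun a => ?_, fun b => ?_⟩⟩
    · have := (rowDeg_glue_castAdd G H a).symm.trans ((hrow _).trans (comp_dA_castAdd a))
      omega
    · exact (colDeg_glue_castAdd G H b).symm.trans ((hcol _).trans (comp_dB_castAdd b))
    · exact (rowDeg_glue_natAdd G H a).symm.trans ((hrow _).trans (comp_dA_natAdd a))
    · have := (colDeg_glue_natAdd G H b).symm.trans ((hcol _).trans (comp_dB_natAdd b))
      omega
  · rintro ⟨⟨hGr, hGc⟩, ⟨hHr, hHc⟩⟩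
    refine ⟨fun i => ?_, fun j => ?_⟩
    · induction i using Fin.addCases with
      | left a => exact (rowDeg_glue_castAdd G H a).trans (by rw [hGr, comp_dA_castAdd])
      | right a => exact (rowDeg_glue_natAdd G H a).trans (by rw [hHr, comp_dA_natAdd])
    · induction j using Fin.addCases with
      | left b => exact (colDeg_glue_castAdd G H b).trans (by rw [hGc, comp_dB_castAdd])
      | right b => exact (colDeg_glue_natAdd G H b).trans (by rw [hHc, comp_dB_natAdd])

theorem glue_blocks_eq_of_realizes_comp (h₁ : ∑ a, d₁.dA a = ∑ b, d₁.dB b)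
    {E : Fin (d₁.comp d₂).nA → Fin (d₁.comp d₂).nB → Bool} (hE : (d₁.comp d₂).Realizes E) :
    glue (fun a b => E (Fin.castAdd _ a) (Fin.castAdd _ b))
      (fun a b => E (Fin.natAdd _ a) (Fin.natAdd _ b)) = E := by
  set G : Fin d₁.nA → Fin d₁.nB → Bool := fun a b => E (Fin.castAdd _ a) (Fin.castAdd _ b)
  set T : Fin d₁.nA → Fin d₂.nB → Bool := fun a b => E (Fin.castAdd _ a) (Fin.natAdd _ b)
  set L : Fin d₂.nA → Fin d₁.nB → Bool := fun a b => E (Fin.natAdd _ a) (Fin.castAdd _ b)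
  have hrow : ∑ a, (rowDeg G a + rowDeg T a) = ∑ a, (d₁.dA a + d₂.nB) :=
    sum_congr rfl fun a _ => (rowDeg_fin_add E (Fin.castAdd d₂.nA a)).symm.trans
      ((hE.1 _).trans (comp_dA_castAdd a))
  have hcol : ∑ b, (colDeg G b + colDeg L b) = ∑ b, d₁.dB b :=
    sum_congr rfl fun b _ => (colDeg_fin_add E (Fin.castAdd d₂.nB b)).symm.trans
      ((hE.2 _).trans (comp_dB_castAdd b))
  have hT_le : ∀ a ∈ univ, rowDeg T a ≤ d₂.nB := fun a _ => rowDeg_le T a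
  have hsum_T : ∑ a, rowDeg T a ≤ ∑ _a : Fin d₁.nA, d₂.nB := sum_le_sum hT_le
  have hG := sum_rowDeg_eq_sum_colDeg G
  simp only [sum_add_distrib, sum_const, card_univ, Fintype.card_fin, smul_eq_mul]
    at hrow hcol hsum_T
  have hT_full : ∑ a, rowDeg T a = ∑ _a : Fin d₁.nA, d₂.nB := by
    rw [sum_const, card_univ, Fintype.card_fin, smul_eq_mul]
    omega
  have hL_empty : ∑ b, colDeg L b = 0 := by omega
  have hT (a b) : T a b = true :=
    filter_card_eq (((sum_eq_sum_iff_of_le hT_le).1 hT_full a (mem_univ a)).trans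
      (card_fin _).symm) b (mem_univ b)
  have hL (a b) : L a b = false := by
    simpa using card_filter_eq_zero_iff.1 (sum_eq_zero_iff.1 hL_empty b (mem_univ b)) a
      (mem_univ a)
  funext i j
  induction i using Fin.addCases <;> induction j using Fin.addCases
  · simp [G]
  · simpa using (hT _ _).symm
  · simpa using (hL _ _).symm
  · simp

theorem realizes_comp_castAdd_natAdd (h₁ : ∑ a, d₁.dA a = ∑ b, d₁.dB b)
    {E : Fin (d₁.comp d₂).nA → Fin (d₁.comp d₂).nB → Bool} (hE : (d₁.comp d₂).Realizes E)
    (a : Fin d₁.nA) (b : Fin d₂.nB) : E (Fin.castAdd _ a) (Fin.natAdd _ b) = true := by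
  rw [← glue_blocks_eq_of_realizes_comp h₁ hE]
  simp

theorem count_comp (h₁ : ∑ a, d₁.dA a = ∑ b, d₁.dB b) :
    (d₁.comp d₂).count = d₁.count * d₂.count := by
  have hset : {E | (d₁.comp d₂).Realizes E} =
      (fun p => glue p.1 p.2) '' ({G | d₁.Realizes G} ×ˢ {H | d₂.Realizes H}) := by
    ext E
    constructor
    · intro hE
      have hglue := glue_blocks_eq_of_realizes_comp h₁ hE
      refine ⟨(fun a b => E (Fin.castAdd _ a) (Fin.castAdd _ b),
        fun a b => E (Fin.natAdd _ a) (Fin.natAdd _ b)), realizes_comp_glue_iff.1 ?_, hglue⟩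
      exact (congrArg (d₁.comp d₂).Realizes hglue).mpr hE
    · rintro ⟨⟨G, H⟩, hGH, rfl⟩
      exact realizes_comp_glue_iff.2 hGH
  exact (congrArg Set.ncard hset).trans ((Set.ncard_image_of_injective _
    fun p q h => Prod.ext_iff.2 ((glue_inj _ _).1 h)).trans Set.ncard_prod)

theorem count_pow {γ : BipDeg} (hγ : ∑ a, γ.dA a = ∑ b, γ.dB b) (s : ℕ) :
    (γ.pow s).count = γ.count ^ (s + 1) := by
  induction s with
  | zero => simp [pow]
  | succ s ih => rw [pow, count_comp hγ, ih]; ring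

end Comp

-- An `abbrev`, so that `Fin (d.lower a b).nA` and `Fin d.nA` are reducibly defeq.
abbrev lower (d : BipDeg) (a : Fin d.nA) (b : Fin d.nB) : BipDeg :=
  ⟨d.nA, d.nB, Function.update d.dA a (d.dA a - 1), Function.update d.dB b (d.dB b - 1)⟩

theorem sum_abs_update_sub_one {n : ℕ} (f : Fin n → ℕ) (i : Fin n) (h : 0 < f i) :
    ∑ j, |((Function.update f i (f i - 1) j : ℕ) : ℤ) - f j| = 1 := by
  rw [sum_eq_single i fun j _ hj => by simp [Function.update_of_ne hj], Function.update_self]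
  · simp [Nat.cast_sub h]
  · simp

theorem Realizes.lower_setEntry {d : BipDeg} {E : Fin d.nA → Fin d.nB → Bool}
    (hE : d.Realizes E) {a : Fin d.nA} {b : Fin d.nB} (hab : E a b = true) :
    (d.lower a b).Realizes (setEntry E a b false) := by
  refine ⟨fun i => ?_, fun j => ?_⟩
  · have := rowDeg_setEntry_add E a b false i
    rw [hE.1 i] at this
    by_cases hi : i = a <;> simp_all [lower]; omega
  · have := colDeg_setEntry_add E a b false j
    rw [hE.2 j] at this
    by_cases hj : j = b <;> simp_all [lower]; omega

theorem count_le_count_lower {d : BipDeg} {a : Fin d.nA} {b : Fin d.nB}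
    (hab : ∀ E, d.Realizes E → E a b = true) : d.count ≤ (d.lower a b).count := by
  refine Set.ncard_le_ncard_of_injOn (fun E => setEntry E a b false)
    (fun E hE => Realizes.lower_setEntry hE (hab E hE)) fun E hE E' hE' h => ?_
  funext i j
  by_cases hij : i = a ∧ j = b
  · rw [hij.1, hij.2, hab E hE, hab E' hE']
  · simpa only [setEntry, if_neg hij] using congrFun (congrFun h i) j

section Step

variable {γ δ : BipDeg} {a₀ : Fin γ.nA} {a' : Fin δ.nA} {b' : Fin δ.nB}

theorem Realizes.comp_lower_moveEntry (ha' : 0 < δ.dA a') (hb' : 0 < δ.dB b')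
    {E : Fin (γ.nA + δ.nA) → Fin (γ.nB + δ.nB) → Bool} (hE : (γ.comp (δ.lower a' b')).Realizes E)
    {c : Fin (γ.nB + δ.nB)} (hx : E (Fin.castAdd _ a₀) c = true)
    (hy : E (Fin.natAdd _ a') c = false) :
    ((γ.comp δ).lower (Fin.castAdd _ a₀) (Fin.natAdd _ b')).Realizes
      (moveEntry E (Fin.castAdd _ a₀) (Fin.natAdd _ a') c) := by
  refine ⟨fun (i : Fin (γ.nA + δ.nA)) => ?_, fun (j : Fin (γ.nB + δ.nB)) => ?_⟩
  · have h₁ := rowDeg_moveEntry_add hx hy i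
    have h₂ := hE.1 i
    simp only [comp, lower] at h₂ ⊢
    induction i using Fin.addCases with
    | left a =>
      rcases eq_or_ne a a₀ with rfl | ha <;> simp_all [Function.update_apply]
      omega
    | right a =>
      rcases eq_or_ne a a' with rfl | ha <;> simp_all [Function.update_apply]
      omega
  · refine (congrFun (colDeg_moveEntry hx hy) j).trans ((hE.2 j).trans ?_)
    simp only [comp, lower]
    induction j using Fin.addCases with
    | left b => simp
    | right b => rcases eq_or_ne b b' with rfl | hb <;> simp_all [Function.update_apply]; omega

theorem exists_eq_false_of_realizes_lower (ha'B : δ.dA a' ≤ δ.nB)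
    {H : Fin δ.nA → Fin δ.nB → Bool} (hH : (δ.lower a' b').Realizes H) :
    ∃ b, H a' b = false := by
  by_contra! h
  have hfull : rowDeg H a' = δ.nB := by simp [rowDeg, h]
  have := (hH.1 a').symm.trans hfull
  simp only [Function.update_self] at this
  have := b'.pos
  omega

def glueMoveEdge (a₀ : Fin γ.nA) (b₀ : Fin γ.nB) (a' : Fin δ.nA)
    (bstar : (Fin δ.nA → Fin δ.nB → Bool) → Fin δ.nB)
    (p : Bool × (Fin γ.nA → Fin γ.nB → Bool) × (Fin δ.nA → Fin δ.nB → Bool)) :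
    Fin (γ.nA + δ.nA) → Fin (γ.nB + δ.nB) → Bool :=
  moveEntry (glue p.2.1 p.2.2) (Fin.castAdd _ a₀) (Fin.natAdd _ a')
    (if p.1 then Fin.castAdd _ b₀ else Fin.natAdd _ (bstar p.2.2))

variable {b₀ : Fin γ.nB} {bstar : (Fin δ.nA → Fin δ.nB → Bool) → Fin δ.nB}

theorem Realizes.glueMoveEdge (ha' : 0 < δ.dA a') (hb' : 0 < δ.dB b') (c : Bool)
    {G : Fin γ.nA → Fin γ.nB → Bool} (hG : γ.Realizes G) (hG₀ : G a₀ b₀ = true)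
    {H : Fin δ.nA → Fin δ.nB → Bool} (hH : (δ.lower a' b').Realizes H)
    (hH' : H a' (bstar H) = false) :
    ((γ.comp δ).lower (Fin.castAdd _ a₀) (Fin.natAdd _ b')).Realizes
      (glueMoveEdge a₀ b₀ a' bstar (c, G, H)) := by
  have hGH := realizes_comp_glue_iff.2 ⟨hG, hH⟩
  cases c
  · exact hGH.comp_lower_moveEntry ha' hb' (by simp) (by simpa using hH')
  · exact hGH.comp_lower_moveEntry ha' hb' (by simpa using hG₀) (by simp)

theorem glueMoveEdge_injOn (hγ : ∀ G, γ.Realizes G → G a₀ b₀ = true)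
    (hbstar : ∀ H : Fin δ.nA → Fin δ.nB → Bool, (δ.lower a' b').Realizes H →
      H a' (bstar H) = false) :
    Set.InjOn (glueMoveEdge a₀ b₀ a' bstar)
      (Set.univ ×ˢ {G | γ.Realizes G} ×ˢ
        {H : Fin δ.nA → Fin δ.nB → Bool | (δ.lower a' b').Realizes H}) := by
  rintro ⟨c, G, H⟩ ⟨-, hG, hH⟩ ⟨c', G', H'⟩ ⟨-, hG', hH'⟩ hK
  have hK' (i j) := congrFun (congrFun hK i) j
  simp only [glueMoveEdge] at hK'
  obtain rfl : c = c' := by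
    have := hK' (Fin.natAdd _ a') (Fin.castAdd _ b₀)
    cases c <;> cases c' <;> simp_all [moveEntry_apply]
  have hGG : G = G' := by
    funext a b
    by_cases hab : c = true ∧ a = a₀ ∧ b = b₀
    · rw [hab.2.1, hab.2.2, hγ G hG, hγ G' hG']
    · have := hK' (Fin.castAdd _ a) (Fin.castAdd _ b)
      rwa [moveEntry_apply_of_ne, moveEntry_apply_of_ne, glue_castAdd_castAdd,
        glue_castAdd_castAdd] at this <;> cases c <;> simp_all
  have hHH : H = H' := by
    have hb : c = false → bstar H = bstar H' := fun hc => by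
      have := hK' (Fin.castAdd _ a₀) (Fin.natAdd _ (bstar H))
      simp_all [moveEntry_apply]
    funext a b
    by_cases hab : c = false ∧ a = a' ∧ b = bstar H
    · rw [hab.2.1, hab.2.2, hbstar H hH, hb hab.1, hbstar H' hH']
    · have := hK' (Fin.natAdd _ a) (Fin.natAdd _ b)
      rwa [moveEntry_apply_of_ne, moveEntry_apply_of_ne, glue_natAdd_natAdd,
        glue_natAdd_natAdd] at this <;> cases c <;> simp_all
  rw [hGG, hHH]

theorem two_mul_count_le_count_comp_lower (hγ : ∀ G, γ.Realizes G → G a₀ b₀ = true)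
    (ha' : 0 < δ.dA a') (ha'B : δ.dA a' ≤ δ.nB) (hb' : 0 < δ.dB b') :
    2 * (γ.count * (δ.lower a' b').count) ≤
      ((γ.comp δ).lower (Fin.castAdd _ a₀) (Fin.natAdd _ b')).count := by
  have : Nonempty (Fin δ.nB) := ⟨b'⟩
  choose! bstar hbstar using fun (H : Fin δ.nA → Fin δ.nB → Bool)
    (hH : (δ.lower a' b').Realizes H) => exists_eq_false_of_realizes_lower ha'B hH
  have hsrc : ((Set.univ : Set Bool) ×ˢ {G | γ.Realizes G} ×ˢ
      {H : Fin δ.nA → Fin δ.nB → Bool | (δ.lower a' b').Realizes H}).ncard =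
        2 * (γ.count * (δ.lower a' b').count) := by
    rw [Set.ncard_prod, Set.ncard_prod, Set.ncard_univ, Nat.card_eq_fintype_card,
      Fintype.card_bool]
    rfl
  rw [← hsrc]
  refine Set.ncard_le_ncard_of_injOn _ ?_ (glueMoveEdge_injOn hγ hbstar)
  rintro ⟨c, G, H⟩ ⟨-, hG, hH⟩
  exact hG.glueMoveEdge ha' hb' c (hγ G hG) hH (hbstar H hH)

end Step

theorem exists_lower_pow_count_ge {γ : BipDeg} (hγ : 0 < γ.count) {a₀ : Fin γ.nA}
    {b₀ : Fin γ.nB} (hab : ∀ G, γ.Realizes G → G a₀ b₀ = true) (s : ℕ) :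
    ∃ a b, 0 < (γ.pow s).dA a ∧ 0 < (γ.pow s).dB b ∧
      2 ^ s * (γ.pow s).count ≤ ((γ.pow s).lower a b).count := by
  obtain ⟨G, hG⟩ := exists_realizes_of_count_pos hγ
  have hbal := hG.sum_dA_eq_sum_dB
  induction s with
  | zero =>
    exact ⟨a₀, b₀, hG.dA_pos (hab G hG), hG.dB_pos (hab G hG),
      by simpa [pow] using count_le_count_lower hab⟩
  | succ s ih =>
    obtain ⟨a, b, ha, hb, hcount⟩ := ih
    obtain ⟨H, hH⟩ := exists_realizes_of_count_pos (d := γ.pow s)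
      (by rw [count_pow hbal]; exact pow_pos hγ _)
    refine ⟨Fin.castAdd _ a₀, Fin.natAdd _ b, ?_, ?_, ?_⟩
    · simp only [pow, comp_dA_castAdd]
      have := hG.dA_pos (hab G hG)
      omega
    · simp only [pow, comp_dB_natAdd]
      omega
    · calc 2 ^ (s + 1) * (γ.pow (s + 1)).count
          = 2 * (γ.count * (2 ^ s * (γ.pow s).count)) := by
            rw [pow, count_comp hbal]; ring
        _ ≤ 2 * (γ.count * ((γ.pow s).lower a b).count) := by gcongr
        _ ≤ _ := two_mul_count_le_count_comp_lower hab ha (hH.dA_le a) hb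

end BipDeg

/-- If a class of bipartite degree sequences contains a graphic `α` with
non-empty first class and a graphic `β` with non-empty second class, its
closure under Tyshkevich composition is not `P`-stable: for
`d(r) = (α ∘ β)^{∘ r}` there is a degree sequence `d'` at `ℓ¹`-distance `2`
from `d(r)` with `|𝒢(d')| ≥ C·|𝒢(d(r))|·c^r` for constants `c > 1`, `C > 0`. -/
theorem stmt_14 (α β : BipDeg) (hα : 0 < α.nA) (hβ : 0 < β.nB)
    (hαc : 0 < α.count) (hβc : 0 < β.count) :
    ∃ c C : ℝ, 1 < c ∧ 0 < C ∧ ∀ r : ℕ, 1 ≤ r →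
      let d := BipDeg.pow (α.comp β) (r - 1)
      ∃ (dA' : Fin d.nA → ℕ) (dB' : Fin d.nB → ℕ),
        (∑ i, |(dA' i : ℤ) - (d.dA i : ℤ)|) +
          (∑ j, |(dB' j : ℤ) - (d.dB j : ℤ)|) = 2 ∧
        C * ((d.count : ℝ) * c ^ r) ≤
          (BipDeg.count ⟨d.nA, d.nB, dA', dB'⟩ : ℝ) := by
  obtain ⟨A, hA⟩ := BipDeg.exists_realizes_of_count_pos hαc
  have hαbal := hA.sum_dA_eq_sum_dB
  have hγ : 0 < (α.comp β).count := by
    rw [BipDeg.count_comp hαbal]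
    exact Nat.mul_pos hαc hβc
  refine ⟨2, 1 / 2, by norm_num, by norm_num, fun r hr => ?_⟩
  obtain ⟨a, b, ha, hb, hcount⟩ := BipDeg.exists_lower_pow_count_ge hγ
    (a₀ := Fin.castAdd _ ⟨0, hα⟩) (b₀ := Fin.natAdd _ ⟨0, hβ⟩)
    (fun G hG => BipDeg.realizes_comp_castAdd_natAdd hαbal hG _ _) (r - 1)
  refine ⟨(((α.comp β).pow (r - 1)).lower a b).dA, (((α.comp β).pow (r - 1)).lower a b).dB,
    ?_, ?_⟩
  · rw [BipDeg.sum_abs_update_sub_one _ _ ha, BipDeg.sum_abs_update_sub_one _ _ hb]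
    norm_num
  · have h2r : (2 : ℝ) ^ r = 2 * 2 ^ (r - 1) := by
      rw [← pow_succ']
      congr
      omega
    calc 1 / 2 * ((((α.comp β).pow (r - 1)).count : ℝ) * 2 ^ r)
        = 2 ^ (r - 1) * ((α.comp β).pow (r - 1)).count := by rw [h2r]; ring
      _ ≤ (((α.comp β).pow (r - 1)).lower a b).count := by exact_mod_cast hcount
end
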